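/- arXiv:1303.6318 — 8 statements merged into one kernel-verified Lean document; each statement's English description precedes it below -/
import Mathlib

section
/- Let ε : H → G be a central extension. Then H is perfect if and only if for every central extension ζ : H' → G there exists at most one group homomorphism η : H → H' satisfying ζ ∘ η = ε. -/
/-!
Two lifts `η, θ` of `ε` through a central extension differ by the map `h ↦ η h * (θ h)⁻¹`,
which lands in the centre and is therefore a homomorphism to an abelian group; on a perfect
group it is trivial. Conversely, `H × Hᵃᵇ → G`, `(h, a) ↦ ε h`, is a central extension through
which `h ↦ (h, 1)` and `h ↦ (h, [h])` both lift `ε`; they agree only if `Hᵃᵇ` is trivial.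
-/

universe u

/-- A central extension: a surjective group homomorphism whose kernel is central. -/
structure IsCentralExtension {H : Type*} {G : Type*} [Group H] [Group G]
    (ε : H →* G) : Prop where
  surjective : Function.Surjective ε
  central : ε.ker ≤ Subgroup.center H

namespace MonoidHom

variable {H K : Type*} [Group H] [Group K]

def mulInvToCenter (η θ : H →* K) (hc : ∀ h, η h * (θ h)⁻¹ ∈ Subgroup.center K) :
    H →* Subgroup.center K where
  toFun h := ⟨η h * (θ h)⁻¹, hc h⟩
  map_one' := by simp
  map_mul' a b := Subtype.ext <| by
    have hb := Subgroup.mem_center_iff.mp (hc b) (θ a)⁻¹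
    calc η (a * b) * (θ (a * b))⁻¹ = η a * (η b * (θ b)⁻¹ * (θ a)⁻¹) := by
          simp only [map_mul, mul_inv_rev, mul_assoc]
      _ = η a * (θ a)⁻¹ * (η b * (θ b)⁻¹) := by rw [← hb, mul_assoc]

theorem eq_of_commutator_eq_top_of_mul_inv_mem_center (hH : commutator H = ⊤)
    {η θ : H →* K} (hc : ∀ h, η h * (θ h)⁻¹ ∈ Subgroup.center K) : η = θ := by
  have hker : (mulInvToCenter η θ hc).ker = ⊤ := by
    rw [← top_le_iff, ← hH]
    exact open scoped IsMulCommutative in Abelianization.commutator_subset_ker _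
  ext h
  have h1 : mulInvToCenter η θ hc h = 1 := by rw [← MonoidHom.mem_ker, hker]; trivial
  exact mul_inv_eq_one.mp (congrArg Subtype.val h1)

end MonoidHom

namespace IsCentralExtension

variable {H G : Type*} [Group H] [Group G]

theorem mul_inv_mem_center {ζ : H →* G} (hζ : IsCentralExtension ζ) {K : Type*} [Group K]
    {η θ : K →* H} (h : ζ.comp η = ζ.comp θ) (k : K) : η k * (θ k)⁻¹ ∈ Subgroup.center H :=
  hζ.central <| by
    rw [MonoidHom.mem_ker, map_mul, map_inv, mul_inv_eq_one]
    exact DFunLike.congr_fun h k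

theorem comp_fst {ε : H →* G} (hε : IsCentralExtension ε) (A : Type*) [CommGroup A] :
    IsCentralExtension (ε.comp (MonoidHom.fst H A)) where
  surjective g := by
    obtain ⟨h, rfl⟩ := hε.surjective g
    exact ⟨(h, 1), rfl⟩
  central := by
    rintro ⟨h, a⟩ hker
    have hh : h ∈ Subgroup.center H := hε.central hker
    refine Subgroup.mem_center_iff.mpr fun ⟨x, b⟩ ↦ Prod.ext ?_ (mul_comm b a)
    exact Subgroup.mem_center_iff.mp hh x

end IsCentralExtension

/-- Let `ε : H → G` be a central extension.  Then `H` is perfect if and only if for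
every central extension `ζ : H' → G` there is at most one homomorphism
`η : H → H'` with `ζ ∘ η = ε`. -/
theorem perfect_iff_at_most_one_lift {H G : Type u} [Group H] [Group G]
    (ε : H →* G) (hε : IsCentralExtension ε) :
    commutator H = ⊤ ↔
      ∀ (H' : Type u) [Group H'], ∀ ζ : H' →* G, IsCentralExtension ζ →
        ∀ η θ : H →* H', ζ.comp η = ε → ζ.comp θ = ε → η = θ := by
  constructor
  · intro hH H' _ ζ hζ η θ hη hθ
    exact MonoidHom.eq_of_commutator_eq_top_of_mul_inv_mem_center hH
      (hζ.mul_inv_mem_center (hη.trans hθ.symm))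
  · intro huniq
    have hlifts := huniq (H × Abelianization H) _ (hε.comp_fst (Abelianization H))
      ((MonoidHom.id H).prod 1) ((MonoidHom.id H).prod Abelianization.of) rfl rfl
    have hof : (Abelianization.of : H →* Abelianization H) = 1 :=
      (congrArg ((MonoidHom.snd H (Abelianization H)).comp ·) hlifts).symm
    rw [← Abelianization.ker_of, hof, MonoidHom.ker_one]
end

section
/- Every perfect group admits a universal central extension. -/
universe u

/-- A universal central extension: a central extension through which every central
extension factors uniquely. -/
def IsUniversalCentralExtension {U G : Type u} [Group U] [Group G] (π : U →* G) : Prop :=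
  IsCentralExtension π ∧
    ∀ (H : Type u) [Group H], ∀ ε : H →* G, IsCentralExtension ε →
      ∃! η : U →* H, ε.comp η = π

/-- A group together with a homomorphism to `G`. -/
structure GroupOver (G : Type u) [Group G] where
  carrier : Type u
  [grp : Group carrier]
  map : carrier →* G

attribute [instance] GroupOver.grp

/-! Write `G = F ⧸ R` with `F` the free group on `G`. Every central extension `H → G` receives a
map from `F` over `G` (freeness), and this map kills `⁅R, F⁆` because `R` lands in the central
kernel; so `E = F ⧸ ⁅R, F⁆` maps over `G` to every central extension. Since `G` is perfect,
`E = ⁅E, E⁆ · Z(E)`, hence `⁅E, E⁆` is perfect and still a central extension of `G`. Two maps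
from a perfect group into a central extension that agree over `G` differ by central factors,
which commutators do not see, so they coincide: `⁅E, E⁆ → G` is universal. -/

open Subgroup Group
open scoped commutatorElement

theorem commutatorElement_mul_mem_center {H : Type*} [Group H] {z w : H}
    (hz : z ∈ center H) (hw : w ∈ center H) (a b : H) : ⁅a * z, b * w⁆ = ⁅a, b⁆ := by
  simp only [commutatorElement_def, mul_inv_rev, mul_assoc]
  rw [(hz.comm b).left_comm, (hz.comm w).left_comm, mul_inv_cancel_left,
    (hw.comm a⁻¹).left_comm, mul_inv_cancel_left]

theorem FreeGroup.exists_comp_eq_lift {α H G : Type*} [Group H] [Group G] {ε : H →* G}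
    (hε : Function.Surjective ε) (f : α → G) :
    ∃ ψ : FreeGroup α →* H, ε.comp ψ = FreeGroup.lift f :=
  ⟨FreeGroup.lift (Function.surjInv hε ∘ f),
    FreeGroup.ext_hom _ _ fun a => by simp [Function.surjInv_eq hε]⟩

theorem isCentralExtension_lift_commutator_ker_top {F G : Type*} [Group F] [Group G]
    {p : F →* G} (hp : Function.Surjective p) :
    IsCentralExtension (QuotientGroup.lift ⁅p.ker, ⊤⁆ p (commutator_le_left _ _)) where
  surjective := QuotientGroup.lift_surjective_of_surjective _ _ hp _
  central := by
    rw [QuotientGroup.ker_lift, ← commutator_top_right_eq_bot_iff_le_center,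
      ← map_top_of_surjective _ (QuotientGroup.mk'_surjective _), ← map_commutator,
      Subgroup.map_eq_bot_iff, QuotientGroup.ker_mk']

namespace IsCentralExtension

variable {A E F G H : Type*} [Group A] [Group E] [Group F] [Group G] [Group H]

theorem hom_ext [IsPerfect A] {ε : H →* G} (hε : IsCentralExtension ε) {η₁ η₂ : A →* H}
    (h : ε.comp η₁ = ε.comp η₂) : η₁ = η₂ := by
  have hcentral : ∀ a, (η₁ a)⁻¹ * η₂ a ∈ center H := fun a => hε.central <| by
    rw [MonoidHom.mem_ker, map_mul, map_inv, ← MonoidHom.comp_apply, ← MonoidHom.comp_apply, h,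
      inv_mul_cancel]
  refine MonoidHom.eq_of_eqOn_dense (commutator_eq_closure A ▸ IsPerfect.commutator_eq_top) ?_
  rintro _ ⟨a, b, rfl⟩
  calc η₁ ⁅a, b⁆ = ⁅η₁ a, η₁ b⁆ := map_commutatorElement _ _ _
    _ = ⁅η₁ a * ((η₁ a)⁻¹ * η₂ a), η₁ b * ((η₁ b)⁻¹ * η₂ b)⁆ :=
      (commutatorElement_mul_mem_center (hcentral a) (hcentral b) _ _).symm
    _ = η₂ ⁅a, b⁆ := by simp only [mul_inv_cancel_left, map_commutatorElement]

theorem map_commutator_eq_top [IsPerfect G] {π : E →* G} (hπ : Function.Surjective π) :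
    (commutator E).map π = ⊤ := by
  rw [map_commutator_eq, MonoidHom.range_eq_top_of_surjective π hπ, ← commutator_def,
    IsPerfect.commutator_eq_top]

theorem exists_mem_commutator_mul_mem_center [IsPerfect G] {π : E →* G}
    (hπ : IsCentralExtension π) (x : E) : ∃ c ∈ commutator E, ∃ z ∈ center E, c * z = x := by
  obtain ⟨c, hc, hcx⟩ : π x ∈ (commutator E).map π := by
    rw [map_commutator_eq_top hπ.surjective]; trivial
  refine ⟨c, hc, c⁻¹ * x, hπ.central ?_, mul_inv_cancel_left c x⟩
  rw [MonoidHom.mem_ker, map_mul, map_inv, hcx, inv_mul_cancel]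

theorem isPerfect_commutator [IsPerfect G] {π : E →* G} (hπ : IsCentralExtension π) :
    IsPerfect (commutator E) := by
  refine isPerfect_iff.mpr <| le_antisymm (commutator_le_self _) ?_
  refine commutator_le.mpr fun x _ y _ => ?_
  obtain ⟨c, hc, z, hz, rfl⟩ := hπ.exists_mem_commutator_mul_mem_center x
  obtain ⟨d, hd, w, hw, rfl⟩ := hπ.exists_mem_commutator_mul_mem_center y
  rw [commutatorElement_mul_mem_center hz hw]
  exact commutator_mem_commutator hc hd

theorem comp_subtype {π : E →* G} (hπ : IsCentralExtension π) {K : Subgroup E}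
    (hK : K.map π = ⊤) : IsCentralExtension (π.comp K.subtype) where
  surjective g := by
    obtain ⟨x, hx, rfl⟩ : g ∈ K.map π := hK ▸ mem_top g
    exact ⟨⟨x, hx⟩, rfl⟩
  central _ hk := mem_center_iff.mpr fun l => Subtype.ext <|
    mem_center_iff.mp (hπ.central hk) l

theorem commutator_ker_comp_le_ker {ε : H →* G} (hε : IsCentralExtension ε) (ψ : F →* H) :
    ⁅(ε.comp ψ).ker, ⊤⁆ ≤ ψ.ker := by
  rw [← Subgroup.map_eq_bot_iff, map_commutator, eq_bot_iff]
  calc ⁅(ε.comp ψ).ker.map ψ, (⊤ : Subgroup F).map ψ⁆ ≤ ⁅center H, ⊤⁆ := by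
        refine commutator_mono ?_ le_top
        rw [← MonoidHom.comap_ker]
        exact (map_comap_le _ _).trans hε.central
    _ = ⊥ := commutator_top_right_eq_bot_iff_le_center.mpr le_rfl

theorem exists_comp_eq_lift_commutator_ker {ε : H →* G} (hε : IsCentralExtension ε)
    {p : F →* G} {ψ : F →* H} (hψ : ε.comp ψ = p) :
    ∃ φ : F ⧸ ⁅p.ker, ⊤⁆ →* H, ε.comp φ = QuotientGroup.lift _ p (commutator_le_left _ _) := by
  subst hψ
  exact ⟨QuotientGroup.lift _ ψ (hε.commutator_ker_comp_le_ker ψ),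
    QuotientGroup.monoidHom_ext _ rfl⟩

end IsCentralExtension

theorem IsCentralExtension.isUniversalCentralExtension_comp_subtype_commutator {E G : Type u}
    [Group E] [Group G] [IsPerfect G] {π : E →* G} (hπ : IsCentralExtension π)
    (hlift : ∀ (H : Type u) [Group H] (ε : H →* G), IsCentralExtension ε →
      ∃ φ : E →* H, ε.comp φ = π) :
    IsUniversalCentralExtension (π.comp (commutator E).subtype) := by
  have := hπ.isPerfect_commutator
  refine ⟨hπ.comp_subtype (map_commutator_eq_top hπ.surjective), fun H _ ε hε => ?_⟩
  obtain ⟨φ, hφ⟩ := hlift H ε hε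
  refine ⟨φ.comp (commutator E).subtype, by rw [← hφ, MonoidHom.comp_assoc],
    fun η hη => hε.hom_ext ?_⟩
  rw [hη, ← MonoidHom.comp_assoc, hφ]

/-- Every perfect group admits a universal central extension. -/
theorem exists_universal_central_extension (G : Type u) [Group G]
    (hG : commutator G = ⊤) :
    ∃ E : GroupOver G, IsUniversalCentralExtension E.map := by
  have : IsPerfect G := isPerfect_def.mpr hG
  have hπ := isCentralExtension_lift_commutator_ker_top (FreeGroup.prod_surjective (α := G))
  refine ⟨{ carrier := commutator (FreeGroup G ⧸ ⁅FreeGroup.prod.ker, ⊤⁆), map := _ },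
    hπ.isUniversalCentralExtension_comp_subtype_commutator fun H _ ε hε => ?_⟩
  obtain ⟨ψ, hψ⟩ := FreeGroup.exists_comp_eq_lift hε.surjective id
  exact hε.exists_comp_eq_lift_commutator_ker hψ
end

section
/- Let G be a perfect group, let φ : F → G be a surjective homomorphism from a free group F, and let R = ker φ. Then the group [F,F]/[R,F] is perfect, and the homomorphism π : [F,F]/[R,F] → G induced by φ is a universal central extension of G whose kernel is (R ∩ [F,F])/[R,F]. -/
universe u

variable {G : Type u} [Group G] {α : Type u}

/-- The subgroup `[R, F]` of the free group `F = FreeGroup α`, where `R = ker φ`. -/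
abbrev commKer (φ : FreeGroup α →* G) : Subgroup (FreeGroup α) :=
  ⁅φ.ker, (⊤ : Subgroup (FreeGroup α))⁆

/-- The map `F/[R,F] → G` induced by `φ`. -/
def liftBar (φ : FreeGroup α →* G) : (FreeGroup α ⧸ commKer φ) →* G :=
  QuotientGroup.lift (commKer φ) φ
    (fun _ hx => Subgroup.commutator_le_left φ.ker ⊤ hx)

/-- The map `π : [F,F]/[R,F] → G`: the restriction of `liftBar φ` to the commutator
subgroup of `F/[R,F]` (which is the image of `[F,F]`). -/
def uceMap (φ : FreeGroup α →* G) :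
    ↥(commutator (FreeGroup α ⧸ commKer φ)) →* G :=
  (liftBar φ).comp (commutator (FreeGroup α ⧸ commKer φ)).subtype

open scoped commutatorElement

/-!
Write `Q = F/[R,F]`. Since `R/[R,F]` is central in `Q`, the map `Q → G` is a central extension,
and in any central extension the commutator `⁅a, b⁆` depends only on the images of `a` and `b`.
As `G` is perfect, `[Q,Q]` already maps onto `G`, so every commutator of `Q` is a commutator of
elements of `[Q,Q]`: hence `[Q,Q]` is perfect, and two lifts of the same map into a central
extension agree on commutators, hence everywhere. Existence of lifts comes from freeness of `F`:
a lift `F → H` of `φ` kills `[R,F]` because it sends `R` into the centre of `H`.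
-/

section CentralExtension

variable {Q H : Type*} [Group Q] [Group H]

theorem commutatorElement_mul_mul_of_mem_center {z w : Q} (hz : z ∈ Subgroup.center Q)
    (hw : w ∈ Subgroup.center Q) (a b : Q) : ⁅a * z, b * w⁆ = ⁅a, b⁆ := by
  have hzb : z * (b * w) * z⁻¹ = b * w := by
    rw [← Subgroup.mem_center_iff.mp hz, mul_inv_cancel_right]
  have hwa : w * a⁻¹ * w⁻¹ = a⁻¹ := by
    rw [← Subgroup.mem_center_iff.mp hw, mul_inv_cancel_right]
  calc ⁅a * z, b * w⁆ = a * (z * (b * w) * z⁻¹) * a⁻¹ * w⁻¹ * b⁻¹ := by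
        rw [commutatorElement_def]; group
    _ = a * b * (w * a⁻¹ * w⁻¹) * b⁻¹ := by rw [hzb]; group
    _ = ⁅a, b⁆ := by rw [hwa, commutatorElement_def]

theorem commutatorElement_eq_of_ker_le_center {ε : H →* G} (hε : ε.ker ≤ Subgroup.center H)
    {a a' b b' : H} (ha : ε a = ε a') (hb : ε b = ε b') : ⁅a, b⁆ = ⁅a', b'⁆ := by
  have mem_center {x x' : H} (h : ε x = ε x') : x⁻¹ * x' ∈ Subgroup.center H :=
    hε (by rw [MonoidHom.mem_ker, map_mul, map_inv, h, inv_mul_cancel])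
  rw [← mul_inv_cancel_left a a', ← mul_inv_cancel_left b b',
    commutatorElement_mul_mul_of_mem_center (mem_center ha) (mem_center hb)]

theorem MonoidHom.eq_of_comp_eq_of_ker_le_center {ε : H →* G}
    (hε : ε.ker ≤ Subgroup.center H) (hQ : commutator Q = ⊤) {η η' : Q →* H}
    (h : ε.comp η = ε.comp η') : η = η' := by
  refine MonoidHom.eq_of_eqOn_dense (s := commutatorSet Q)
    (by rw [← commutator_eq_closure, hQ]) ?_
  rintro _ ⟨a, b, rfl⟩
  simp only [map_commutatorElement]
  exact commutatorElement_eq_of_ker_le_center hε (DFunLike.congr_fun h a)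
    (DFunLike.congr_fun h b)

theorem map_commutator_of_surjective {f : Q →* H} (hf : Function.Surjective f) :
    (commutator Q).map f = commutator H := by
  rw [commutator_def, commutator_def, Subgroup.map_commutator, Subgroup.map_top_of_surjective _ hf]

theorem commutator_eq_top_of_le_commutator {K : Subgroup Q} (h : K ≤ ⁅K, K⁆) :
    commutator K = ⊤ := by
  rwa [eq_top_iff, ← Subgroup.map_subtype_le_map_subtype, Subgroup.map_subtype_commutator,
    ← MonoidHom.range_eq_map, Subgroup.range_subtype]

namespace IsCentralExtension

variable {π : Q →* G}

theorem commutator_commutator_eq_top (hπ : IsCentralExtension π) (hG : commutator G = ⊤) :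
    commutator (commutator Q) = ⊤ := by
  refine commutator_eq_top_of_le_commutator ?_
  rw [commutator_def, Subgroup.commutator_le]
  intro a _ b _
  have hsurj := (map_commutator_of_surjective hπ.surjective).trans hG
  obtain ⟨c, hc, hca⟩ := hsurj.ge (Subgroup.mem_top (π a))
  obtain ⟨d, hd, hdb⟩ := hsurj.ge (Subgroup.mem_top (π b))
  rw [commutatorElement_eq_of_ker_le_center hπ.central hca.symm hdb.symm, ← commutator_def]
  exact Subgroup.commutator_mem_commutator hc hd

theorem comp_subtype_commutator (hπ : IsCentralExtension π) (hG : commutator G = ⊤) :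
    IsCentralExtension (π.comp (commutator Q).subtype) where
  surjective g := by
    obtain ⟨c, hc, rfl⟩ :=
      ((map_commutator_of_surjective hπ.surjective).trans hG).ge (Subgroup.mem_top g)
    exact ⟨⟨c, hc⟩, rfl⟩
  central x hx := Subgroup.mem_center_iff.mpr fun y =>
    Subtype.ext (Subgroup.mem_center_iff.mp (hπ.central hx) y)

end IsCentralExtension

theorem isUniversalCentralExtension_of_commutator_eq_top {U : Type u} [Group U]
    {π : U →* G} (hπ : IsCentralExtension π) (hU : commutator U = ⊤)
    (hlift : ∀ (H : Type u) [Group H] (ε : H →* G), IsCentralExtension ε →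
      ∃ η : U →* H, ε.comp η = π) :
    IsUniversalCentralExtension π := by
  refine ⟨hπ, fun H _ ε hε => ?_⟩
  obtain ⟨η, hη⟩ := hlift H ε hε
  exact ⟨η, hη, fun η' hη' =>
    MonoidHom.eq_of_comp_eq_of_ker_le_center hε.central hU (hη'.trans hη.symm)⟩

end CentralExtension

theorem Subgroup.map_inf_of_ker_le {F N : Type*} [Group F] [Group N] {f : F →* N}
    (H : Subgroup F) {K : Subgroup F} (hK : f.ker ≤ K) :
    (H ⊓ K).map f = H.map f ⊓ K.map f := by
  refine le_antisymm (Subgroup.map_inf_le H K f) ?_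
  rintro _ ⟨⟨h, hH, rfl⟩, hhK⟩
  exact ⟨h, ⟨hH, Subgroup.comap_map_eq_self hK ▸ hhK⟩, rfl⟩

theorem QuotientGroup.map_mk'_le_center {F : Type*} [Group F] (N : Subgroup F) [N.Normal] :
    N.map (QuotientGroup.mk' ⁅N, ⊤⁆) ≤
      Subgroup.center (F ⧸ ⁅N, (⊤ : Subgroup F)⁆) := by
  rw [← Subgroup.commutator_top_right_eq_bot_iff_le_center,
    ← Subgroup.map_top_of_surjective _ (QuotientGroup.mk'_surjective _),
    ← Subgroup.map_commutator, Subgroup.map_eq_bot_iff, QuotientGroup.ker_mk']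

theorem commutator_ker_top_le_ker {F H : Type*} [Group F] [Group H]
    {ε : H →* G} (hε : ε.ker ≤ Subgroup.center H) {ψ : F →* H} {φ : F →* G}
    (h : ε.comp ψ = φ) : ⁅φ.ker, ⊤⁆ ≤ ψ.ker := by
  rw [Subgroup.commutator_le]
  intro r hr f _
  have hψr : ψ r ∈ Subgroup.center H :=
    hε (by rwa [MonoidHom.mem_ker, ← MonoidHom.comp_apply, h])
  rw [MonoidHom.mem_ker, map_commutatorElement, commutatorElement_eq_one_iff_mul_comm]
  exact (Subgroup.mem_center_iff.mp hψr (ψ f)).symm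

theorem FreeGroup.exists_comp_eq_of_surjective {β H : Type*} [Group H]
    {ε : H →* G} (hε : Function.Surjective ε) (φ : FreeGroup β →* G) :
    ∃ ψ : FreeGroup β →* H, ε.comp ψ = φ :=
  ⟨FreeGroup.lift fun a => Function.surjInv hε (φ (FreeGroup.of a)),
    FreeGroup.ext_hom _ _ fun a => by simp [Function.surjInv_eq hε]⟩

theorem isCentralExtension_liftBar {φ : FreeGroup α →* G} (hφ : Function.Surjective φ) :
    IsCentralExtension (liftBar φ) where
  surjective := QuotientGroup.lift_surjective_of_surjective _ _ hφ _
  central := by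
    rw [liftBar, QuotientGroup.ker_lift]
    exact QuotientGroup.map_mk'_le_center φ.ker

theorem exists_comp_eq_liftBar {H : Type*} [Group H] {ε : H →* G} (hε : IsCentralExtension ε)
    (φ : FreeGroup α →* G) :
    ∃ ψ : FreeGroup α ⧸ commKer φ →* H, ε.comp ψ = liftBar φ := by
  obtain ⟨ψ, hψ⟩ := FreeGroup.exists_comp_eq_of_surjective hε.surjective φ
  refine ⟨QuotientGroup.lift _ ψ (commutator_ker_top_le_ker hε.central hψ), ?_⟩
  exact QuotientGroup.monoidHom_ext _ hψ

theorem map_subtype_ker_uceMap (φ : FreeGroup α →* G) :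
    (uceMap φ).ker.map (commutator (FreeGroup α ⧸ commKer φ)).subtype =
      (φ.ker ⊓ commutator (FreeGroup α)).map (QuotientGroup.mk' (commKer φ)) := by
  have hle : (QuotientGroup.mk' (commKer φ)).ker ≤ commutator (FreeGroup α) := by
    rw [QuotientGroup.ker_mk', commutator_def]
    exact Subgroup.commutator_mono le_top le_top
  calc (uceMap φ).ker.map (commutator (FreeGroup α ⧸ commKer φ)).subtype
      = (liftBar φ).ker ⊓ commutator (FreeGroup α ⧸ commKer φ) :=
        Subgroup.subgroupOf_map_subtype (liftBar φ).ker _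
    _ = _ := by
        rw [liftBar, QuotientGroup.ker_lift,
          ← map_commutator_of_surjective (QuotientGroup.mk'_surjective _),
          Subgroup.map_inf_of_ker_le _ hle]

/-- If `G` is perfect and `φ : F ↠ G` with `F` free and `R = ker φ`, then
`[F,F]/[R,F]` is perfect, the induced map `π : [F,F]/[R,F] → G` is a universal
central extension, and `ker π = (R ⊓ [F,F])/[R,F]`. -/
theorem free_presentation_gives_uce (hG : commutator G = ⊤)
    (φ : FreeGroup α →* G) (hφ : Function.Surjective φ) :
    commutator ↥(commutator (FreeGroup α ⧸ commKer φ)) = ⊤ ∧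
    IsUniversalCentralExtension (uceMap φ) ∧
    (uceMap φ).ker.map (commutator (FreeGroup α ⧸ commKer φ)).subtype =
      (φ.ker ⊓ commutator (FreeGroup α)).map (QuotientGroup.mk' (commKer φ)) := by
  have hQ := isCentralExtension_liftBar hφ
  have hperfect := hQ.commutator_commutator_eq_top hG
  refine ⟨hperfect, isUniversalCentralExtension_of_commutator_eq_top
    (hQ.comp_subtype_commutator hG) hperfect fun H _ ε hε => ?_, map_subtype_ker_uceMap φ⟩
  obtain ⟨ψ, hψ⟩ := exists_comp_eq_liftBar hε φ
  exact ⟨ψ.comp (commutator _).subtype, by rw [← MonoidHom.comp_assoc, hψ]; rfl⟩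
end

section
/- Let ε : H → G be a central extension with H centrally closed. Then ε is a universal central extension of G. -/
universe u

/-!
Pull a central extension `ε' : K → G` back along `ε : H → G` to the fibre product
`P = H ×_G K`; its first projection is a central extension of `H`. Homomorphisms
`η : H → K` with `ε' ∘ η = ε` are exactly the sections `h ↦ (h, η h)` of `P → H`, so
the unique section that exists because `1_H` is universal yields a unique lift.
-/

namespace MonoidHom

variable {H K G : Type*} [Group H] [Group K] [Group G] (ε : H →* G) (ε' : K →* G)

def pullback : Subgroup (H × K) :=
  (ε.comp (fst H K)).eqLocus (ε'.comp (snd H K))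

def pullbackFst : ε.pullback ε' →* H :=
  (fst H K).comp (ε.pullback ε').subtype

def pullbackSnd : ε.pullback ε' →* K :=
  (snd H K).comp (ε.pullback ε').subtype

theorem comp_pullbackFst : ε.comp (ε.pullbackFst ε') = ε'.comp (ε.pullbackSnd ε') :=
  ext fun p => p.2

variable {ε ε'}

def pullbackLift (η : H →* K) (hη : ε'.comp η = ε) : H →* ε.pullback ε' :=
  ((id H).prod η).codRestrict _ fun h => (DFunLike.congr_fun hη h).symm

theorem pullbackFst_comp_pullbackLift (η : H →* K) (hη : ε'.comp η = ε) :
    (ε.pullbackFst ε').comp (pullbackLift η hη) = id H :=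
  rfl

theorem pullbackSnd_comp_pullbackLift (η : H →* K) (hη : ε'.comp η = ε) :
    (ε.pullbackSnd ε').comp (pullbackLift η hη) = η :=
  rfl

end MonoidHom

theorem IsCentralExtension.pullbackFst {H K G : Type*} [Group H] [Group K] [Group G]
    (ε : H →* G) {ε' : K →* G} (hε' : IsCentralExtension ε') :
    IsCentralExtension (ε.pullbackFst ε') := by
  refine ⟨fun h => ?_, fun p hp => ?_⟩
  · obtain ⟨k, hk⟩ := hε'.surjective (ε h)
    exact ⟨⟨(h, k), hk.symm⟩, rfl⟩
  · have hp₁ : (p : H × K).1 = 1 := hp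
    have hp₂ : (p : H × K).2 ∈ Subgroup.center K := by
      apply hε'.central
      have hp_fibre : ε (p : H × K).1 = ε' (p : H × K).2 := p.2
      rw [MonoidHom.mem_ker, ← hp_fibre, hp₁, map_one]
    refine Subgroup.mem_center_iff.mpr fun q => Subtype.ext (Prod.ext ?_ ?_)
    · simp [hp₁]
    · exact Subgroup.mem_center_iff.mp hp₂ (q : H × K).2

theorem uce_of_centrally_closed_general {H G : Type u} [Group H] [Group G]
    (ε : H →* G) (hε : IsCentralExtension ε)
    (hcc : IsUniversalCentralExtension (MonoidHom.id H)) :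
    IsUniversalCentralExtension ε := by
  refine ⟨hε, fun K _ ε' hε' => ?_⟩
  obtain ⟨σ, hσ, hσ_unique⟩ := hcc.2 _ _ (hε'.pullbackFst ε)
  refine ⟨(ε.pullbackSnd ε').comp σ, ?_, fun η hη => ?_⟩
  · calc ε'.comp ((ε.pullbackSnd ε').comp σ) = (ε.comp (ε.pullbackFst ε')).comp σ := by
          rw [MonoidHom.comp_pullbackFst, MonoidHom.comp_assoc]
      _ = ε := by rw [MonoidHom.comp_assoc, hσ, MonoidHom.comp_id]
  · rw [← MonoidHom.pullbackSnd_comp_pullbackLift η hη,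
      hσ_unique _ (MonoidHom.pullbackFst_comp_pullbackLift η hη)]

/-- A central extension with centrally closed domain (perfect, and the identity map is
a universal central extension of it) is a universal central extension. -/
theorem uce_of_centrally_closed {H G : Type u} [Group H] [Group G]
    (ε : H →* G) (hε : IsCentralExtension ε)
    (hperf : commutator H = ⊤)
    (hcc : IsUniversalCentralExtension (MonoidHom.id H)) :
    IsUniversalCentralExtension ε :=
  uce_of_centrally_closed_general ε hε hcc
end

section
/- For n ≥ 3, let U₁^StU(2n,R,𝔏) be the subgroup of StU(2n,R,𝔏) generated by {X_{n,i}(a) : i ∈ Ω∖{±n}, a ∈ R} ∪ {X_n(ζ) : ζ ∈ 𝔏}, and let U₁^EU(2n,R,𝔏) be its image in EU(2n,R,𝔏) under the natural epimorphism. Then the natural epimorphism restricts to an isomorphism U₁^StU(2n,R,𝔏) ≅ U₁^EU(2n,R,𝔏); in particular, every element of U₁^StU(2n,R,𝔏) has a unique decomposition of the form X_n(ζ)·X_{n,1}(a₁)·X_{n,2}(a₂)·…·X_{n,−1}(a_{−1}). -/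
/-!
The elements `X_n(ζ)` form a subgroup which commutes with every `X_{n,i}(a)` (R4), and any two
`X_{n,i}(a)`, `X_{n,j}(b)` commute modulo it (R1, R3, and R0 followed by R9 when `j = −i`).
Hence every product of generators can be sorted into `X_n(ζ)·X_{n,1}(a₁)·…·X_{n,−1}(a₋₁)`.
Uniqueness of this decomposition, and with it injectivity on `U₁`, is seen in `EU`: applied to
`e₋ₙ`, the element `T_n(u,b)·∏ T_{n,i}(aᵢ)` has `V`-component `−u` and `e₋ᵢ`-coordinates
`ε₋ᵢ·āᵢ·1̄⁻¹`, and once these agree its `eₙ`-coordinate determines `b`.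
-/

open MulOpposite
open scoped commutatorElement

universe u

/-- A pseudo-involution on a ring `R`: an additive map `a ↦ ā` such that `1̄` is
invertible (with explicit inverse `e = 1̄⁻¹`), `ā̄ = a` and `(ab)‾ = b̄·1̄⁻¹·ā`. -/
structure PseudoInvolution (R : Type*) [Ring R] where
  bar : R → R
  bar_add : ∀ a b : R, bar (a + b) = bar a + bar b
  e : R
  e_bar_one : e * bar 1 = 1
  bar_one_e : bar 1 * e = 1
  bar_bar : ∀ a : R, bar (bar a) = a
  bar_mul : ∀ a b : R, bar (a * b) = bar b * e * bar a

/-- An anti-Hermitian form on a right `R`-module `V` (a right module is encoded as a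
module over the opposite ring, so `u·a` is `op a • u`). -/
structure AntiHermitianForm (R : Type*) [Ring R] (pi : PseudoInvolution R)
    (V : Type*) [AddCommGroup V] [Module Rᵐᵒᵖ V] where
  B : V → V → R
  add_left : ∀ u v w : V, B (u + v) w = B u w + B v w
  add_right : ∀ u v w : V, B u (v + w) = B u v + B u w
  smul_pair : ∀ (a b : R) (u v : V), B (op a • u) (op b • v) = pi.bar a * pi.e * B u v * b
  skew : ∀ u v : V, B u v = - pi.bar (B v u)

variable {R : Type u} [Ring R] {pi : PseudoInvolution R}
variable {V : Type u} [AddCommGroup V] [Module Rᵐᵒᵖ V]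

/-- The Heisenberg group operation `(u,a) ∔ (v,b) = (u+v, a+b+B(u,v))`. -/
def hAdd (f : AntiHermitianForm R pi V) (x y : V × R) : V × R :=
  (x.1 + y.1, x.2 + y.2 + f.B x.1 y.1)

/-- The Heisenberg group inverse `∸(u,a) = (−u, −a+B(u,u))`. -/
def hInv (f : AntiHermitianForm R pi V) (x : V × R) : V × R :=
  (-x.1, -x.2 + f.B x.1 x.1)

/-- The right action of `R` on the Heisenberg group, `(u,a) ↼ b = (ub, b̄·1̄⁻¹·a·b)`. -/
def hAct (pi : PseudoInvolution R) (x : V × R) (b : R) : V × R :=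
  (op b • x.1, pi.bar b * pi.e * x.2 * b)

/-- An odd form parameter: a subgroup of the Heisenberg group, stable under the
`R`-action, lying between `𝔏_min` and `𝔏_max`. -/
structure OddFormParameter (f : AntiHermitianForm R pi V) where
  carrier : Set (V × R)
  add_mem : ∀ x y : V × R, x ∈ carrier → y ∈ carrier → hAdd f x y ∈ carrier
  inv_mem : ∀ x : V × R, x ∈ carrier → hInv f x ∈ carrier
  act_mem : ∀ x : V × R, x ∈ carrier → ∀ b : R, hAct pi x b ∈ carrier
  min_le : ∀ a : R, ((0 : V), a + pi.bar a) ∈ carrier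
  le_max : ∀ x : V × R, x ∈ carrier → x.2 = pi.bar x.2 + f.B x.1 x.1

/-- The index set `Ω = {1,…,n,−n,…,−1}` (for `n = ∞` all nonzero integers). -/
def Omega (n : ℕ∞) : Set ℤ := {i : ℤ | i ≠ 0 ∧ (i.natAbs : ℕ∞) ≤ n}

/-- `ε_i = 1̄⁻¹` for `i > 0` and `ε_i = −1` for `i < 0`. -/
def epsI (pi : PseudoInvolution R) (i : ℤ) : R := if 0 < i then pi.e else -1

/-- A family of "Steinberg generators" in a group `G` satisfying Petrov's relations
R0–R9 of the odd unitary Steinberg group `StU(2n, R, 𝔏)`. -/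
structure StURels (n : ℕ∞) (f : AntiHermitianForm R pi V) (L : OddFormParameter f)
    (G : Type*) [Group G] where
  X : ℤ → ℤ → R → G
  Y : ℤ → V × R → G
  rel0 : ∀ i j : ℤ, i ∈ Omega n → j ∈ Omega n → j ≠ i → j ≠ -i → ∀ a : R,
    X i j a = X (-j) (-i) (epsI pi (-j) * pi.bar a * epsI pi i)
  rel1 : ∀ i j : ℤ, i ∈ Omega n → j ∈ Omega n → j ≠ i → j ≠ -i → ∀ a b : R,
    X i j a * X i j b = X i j (a + b)
  rel2 : ∀ i : ℤ, i ∈ Omega n → ∀ ξ ζ : V × R, ξ ∈ L.carrier → ζ ∈ L.carrier →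
    Y i ξ * Y i ζ = Y i (hAdd f ξ ζ)
  rel3 : ∀ i j h k : ℤ, i ∈ Omega n → j ∈ Omega n → h ∈ Omega n → k ∈ Omega n →
    j ≠ i → j ≠ -i → k ≠ h → k ≠ -h → h ≠ j → h ≠ -i → k ≠ i → k ≠ -j →
    ∀ a b : R, ⁅X i j a, X h k b⁆ = 1
  rel4 : ∀ i j k : ℤ, i ∈ Omega n → j ∈ Omega n → k ∈ Omega n → k ≠ j → k ≠ -j →
    j ≠ -i → k ≠ i → ∀ ξ : V × R, ξ ∈ L.carrier → ∀ a : R, ⁅Y i ξ, X j k a⁆ = 1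
  rel5 : ∀ i j k : ℤ, i ∈ Omega n → j ∈ Omega n → k ∈ Omega n →
    j ≠ i → j ≠ -i → k ≠ j → k ≠ -j → k ≠ i → k ≠ -i →
    ∀ a b : R, ⁅X i j a, X j k b⁆ = X i k (a * b)
  rel6 : ∀ i j : ℤ, i ∈ Omega n → j ∈ Omega n → j ≠ i → j ≠ -i →
    ∀ (u : V) (a : R) (v : V) (b : R), (u, a) ∈ L.carrier → (v, b) ∈ L.carrier →
    ⁅Y i (u, a), Y j (v, b)⁆ = X i (-j) (epsI pi i * f.B u v)
  rel7 : ∀ i : ℤ, i ∈ Omega n →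
    ∀ (u : V) (a : R) (v : V) (b : R), (u, a) ∈ L.carrier → (v, b) ∈ L.carrier →
    ⁅Y i (u, a), Y i (v, b)⁆ = Y i (0, f.B u v - f.B v u)
  rel8 : ∀ i j : ℤ, i ∈ Omega n → j ∈ Omega n → j ≠ i → j ≠ -i →
    ∀ (u : V) (a : R), (u, a) ∈ L.carrier → ∀ b : R,
    ⁅Y i (u, a), X (-i) j b⁆ = X i j (epsI pi i * a * b) * Y (-j) (hAct pi (u, -pi.bar a) b)
  rel9 : ∀ i j : ℤ, i ∈ Omega n → j ∈ Omega n → j ≠ i → j ≠ -i → ∀ a b : R,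
    ⁅X i j a, X j (-i) b⁆ =
      Y i (0, -(epsI pi (-i)) * pi.bar 1 * a * b + pi.bar b * pi.e * pi.bar a * epsI pi i)

/-- `(G, S)` *is* the odd unitary Steinberg group `StU(2n, R, 𝔏)`: it has the universal
property of the presentation, i.e. for every group `H` with Steinberg generators
satisfying R0–R9 there is a unique homomorphism `G →* H` matching the generators. -/
def IsStU {n : ℕ∞} {f : AntiHermitianForm R pi V} {L : OddFormParameter f}
    {G : Type u} [Group G] (S : StURels n f L G) : Prop :=
  ∀ (H : Type u) [Group H], ∀ T : StURels n f L H,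
    ∃! φ : G →* H,
      (∀ i j : ℤ, i ∈ Omega n → j ∈ Omega n → j ≠ i → j ≠ -i → ∀ a : R,
        φ (S.X i j a) = T.X i j a) ∧
      (∀ i : ℤ, i ∈ Omega n → ∀ ξ : V × R, ξ ∈ L.carrier → φ (S.Y i ξ) = T.Y i ξ)

noncomputable section
open scoped Classical
/-- The underlying module of the odd hyperbolic unitary space `Hⁿ ⊥ V`: a free part
with basis indexed by `Ω` together with `V`. -/
abbrev Wm (n : ℕ) (R : Type u) [Ring R] (V : Type u) [AddCommGroup V]
    [Module Rᵐᵒᵖ V] : Type u :=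
  ({i : ℤ // i ∈ Omega (n : ℕ∞)} × Unit → R) × V

/-- The `k`-th coefficient of a vector of the free part (0 for invalid indices). -/
def cf {n : ℕ} (x : {i : ℤ // i ∈ Omega (n : ℕ∞)} × Unit → R) (k : ℤ) : R :=
  if h : k ∈ Omega (n : ℕ∞) then x (⟨k, h⟩, ()) else 0

/-- The hyperbolic basis vector `e_k`. -/
def ebas (n : ℕ) (R : Type u) [Ring R] (V : Type u) [AddCommGroup V] [Module Rᵐᵒᵖ V]
    (k : ℤ) : Wm n R V :=
  (fun j => if (j.1 : ℤ) = k then 1 else 0, 0)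

/-- The embedding of `V` into `Hⁿ ⊥ V`. -/
def embV (n : ℕ) (R : Type u) [Ring R] {V : Type u} [AddCommGroup V] [Module Rᵐᵒᵖ V]
    (u : V) : Wm n R V := (0, u)

/-- The anti-Hermitian form of the odd hyperbolic unitary space `Hⁿ ⊥ V`:
`B(eᵢ, e₋ᵢ) = 1`, `B(e₋ᵢ, eᵢ) = −1̄` for `i > 0`, the hyperbolic part is orthogonal
to `V`, and the form restricts to `B` on `V`. -/
def BW (n : ℕ) (f : AntiHermitianForm R pi V) (w w' : Wm n R V) : R :=
  (∑ i ∈ Finset.Icc (1 : ℤ) (n : ℤ),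
    (pi.bar (cf w.1 i) * pi.e * cf w'.1 (-i)
      - pi.bar (cf w.1 (-i)) * pi.e * pi.bar 1 * cf w'.1 i)) + f.B w.2 w'.2

/-- The odd form parameter of the odd hyperbolic unitary space `Hⁿ ⊥ V`. -/
def LW (n : ℕ) (f : AntiHermitianForm R pi V) (L : OddFormParameter f) :
    Set (Wm n R V × R) :=
  {x | ∃ c a : R, (x.1.2, a) ∈ L.carrier ∧
    x.2 = (∑ i ∈ Finset.Icc (1 : ℤ) (n : ℤ),
      pi.bar (cf x.1.1 i) * pi.e * cf x.1.1 (-i)) + c + pi.bar c + a}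

/-- The elementary transvection `T_ij(a)` as a map,
`w ↦ w + e₋ⱼ·ε₋ⱼ·ā·1̄⁻¹·B(eᵢ,w) − eᵢ·a·εⱼ·B(e₋ⱼ,w)`. -/
def TijFun (n : ℕ) (f : AntiHermitianForm R pi V) (i j : ℤ) (a : R)
    (w : Wm n R V) : Wm n R V :=
  w + op (epsI pi (-j) * pi.bar a * pi.e * BW n f (ebas n R V i) w) • ebas n R V (-j)
    - op (a * epsI pi j * BW n f (ebas n R V (-j)) w) • ebas n R V i

/-- The elementary transvection `T_i(u,b)` as a map,
`w ↦ w − eᵢ·εᵢ·B(u,w) − eᵢ·εᵢ·b·ε₋ᵢ·B(eᵢ,w) + u·ε₋ᵢ·B(eᵢ,w)`. -/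
def TiFun (n : ℕ) (f : AntiHermitianForm R pi V) (i : ℤ) (u : V) (b : R)
    (w : Wm n R V) : Wm n R V :=
  w - op (epsI pi i * BW n f (embV n R u) w) • ebas n R V i
    - op (epsI pi i * b * epsI pi (-i) * BW n f (ebas n R V i) w) • ebas n R V i
    + op (epsI pi (-i) * BW n f (ebas n R V i) w) • embV n R u

/-- Membership in the odd hyperbolic unitary group `U(2n, R, 𝔏)`: a bijective
isometry (linear over the ″right″ ring action) that is equivalent to the identity
modulo the form parameter. -/
def IsUnitary (n : ℕ) (f : AntiHermitianForm R pi V) (L : OddFormParameter f)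
    (g : Wm n R V ≃ₗ[Rᵐᵒᵖ] Wm n R V) : Prop :=
  (∀ w w' : Wm n R V, BW n f (g w) (g w') = BW n f w w') ∧
  (∀ w : Wm n R V, (g w - w, BW n f (w - g w) w) ∈ LW n f L)

/-- The indices `1, …, n−1, −(n−1), …, −1` of `Ω ∖ {±n}`, in the order used in the
canonical decomposition of elements of `U₁`. -/
def idxList (n : ℕ) : List ℤ :=
  ((List.range (n - 1)).map fun k => (k + 1 : ℤ)) ++
    ((List.range (n - 1)).map fun k => -((n : ℤ) - 1 - k))

/-- The subgroup `ᵚᵗᵘU₁(2n, R, 𝔏)` of the Steinberg group, generated by the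
`X_{n,i}(a)` and the `X_n(ζ)`. -/
def U1 {n : ℕ} {f : AntiHermitianForm R pi V} {L : OddFormParameter f}
    {G : Type u} [Group G] (S : StURels (n : ℕ∞) f L G) : Subgroup G :=
  Subgroup.closure
    ({g : G | ∃ i : ℤ, (i ∈ Omega (n : ℕ∞) ∧ i ≠ (n : ℤ) ∧ i ≠ -(n : ℤ)) ∧
        ∃ a : R, g = S.X (n : ℤ) i a} ∪
     {g : G | ∃ ξ ∈ L.carrier, g = S.Y (n : ℤ) ξ})

namespace PseudoInvolution

variable (pi)

lemma bar_zero : pi.bar 0 = 0 := (AddMonoidHom.mk' pi.bar pi.bar_add).map_zero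

lemma bar_neg (a : R) : pi.bar (-a) = -pi.bar a := (AddMonoidHom.mk' pi.bar pi.bar_add).map_neg a

lemma bar_injective : Function.Injective pi.bar := Function.Involutive.injective pi.bar_bar

lemma isUnit_e : IsUnit pi.e := ⟨⟨pi.e, pi.bar 1, pi.e_bar_one, pi.bar_one_e⟩, rfl⟩

end PseudoInvolution

lemma isUnit_epsI (i : ℤ) : IsUnit (epsI pi i) := by
  unfold epsI
  split_ifs
  · exact pi.isUnit_e
  · exact isUnit_one.neg

lemma epsI_of_pos {i : ℤ} (h : 0 < i) : epsI pi i = pi.e := if_pos h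

lemma epsI_of_neg {i : ℤ} (h : i < 0) : epsI pi i = -1 := if_neg h.not_gt

namespace AntiHermitianForm

variable (f : AntiHermitianForm R pi V)

lemma zero_left (v : V) : f.B 0 v = 0 := (AddMonoidHom.mk' (f.B · v) (f.add_left · · v)).map_zero

lemma zero_right (u : V) : f.B u 0 = 0 := (AddMonoidHom.mk' (f.B u) (f.add_right u)).map_zero

lemma neg_left (u v : V) : f.B (-u) v = -f.B u v :=
  (AddMonoidHom.mk' (f.B · v) (f.add_left · · v)).map_neg u

end AntiHermitianForm

lemma hAdd_zero_zero (f : AntiHermitianForm R pi V) :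
    hAdd f ((0 : V), (0 : R)) (0, 0) = (0, 0) := by
  simp [hAdd, f.zero_left]

lemma hAdd_hInv_self (f : AntiHermitianForm R pi V) (ξ : V × R) :
    hAdd f (hInv f ξ) ξ = (0, 0) := by
  simp only [hAdd, hInv, f.neg_left, Prod.mk.injEq]
  constructor <;> abel

namespace OddFormParameter

variable {f : AntiHermitianForm R pi V} (L : OddFormParameter f)

lemma zero_mem : ((0 : V), (0 : R)) ∈ L.carrier := by
  simpa [pi.bar_zero] using L.min_le 0

/-- The right-hand side of R9 lies in `𝔏_min`, as `z + z̄` with `z = 1̄·a·b` for `i > 0`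
and `z = −a·b` for `i < 0`. -/
lemma rel9_rhs_mem {i : ℤ} (hi : i ≠ 0) (a b : R) :
    ((0 : V), -(epsI pi (-i)) * pi.bar 1 * a * b + pi.bar b * pi.e * pi.bar a * epsI pi i)
      ∈ L.carrier := by
  rcases hi.lt_or_gt with hi | hi
  · convert L.min_le (-(a * b)) using 2
    rw [epsI_of_pos (by omega), epsI_of_neg hi, pi.bar_neg, pi.bar_mul, neg_mul, pi.e_bar_one]
    noncomm_ring
  · convert L.min_le (pi.bar 1 * a * b) using 2
    rw [epsI_of_neg (by omega), epsI_of_pos hi, pi.bar_mul, pi.bar_mul, pi.bar_bar]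
    noncomm_ring

end OddFormParameter

lemma mem_Omega_iff {n : ℕ} {k : ℤ} :
    k ∈ Omega (n : ℕ∞) ↔ k ≠ 0 ∧ k.natAbs ≤ n := by
  simp [Omega]

lemma neg_mem_Omega {m : ℕ∞} {k : ℤ} (h : k ∈ Omega m) : -k ∈ Omega m := by
  simpa [Omega] using h

lemma ne_neg_of_mem_Omega {m : ℕ∞} {k : ℤ} (h : k ∈ Omega m) : k ≠ -k := by
  have := h.1
  omega

lemma mem_idxList_iff {n : ℕ} {k : ℤ} :
    k ∈ idxList n ↔ k ∈ Omega (n : ℕ∞) ∧ k ≠ (n : ℤ) ∧ k ≠ -(n : ℤ) := by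
  simp only [idxList, mem_Omega_iff, List.pure_def, List.bind_eq_flatMap, ← List.map_eq_flatMap,
    List.map_map, List.mem_append, List.mem_map, List.mem_range, Function.comp_def]
  constructor
  · rintro (⟨a, ha, rfl⟩ | ⟨a, ha, rfl⟩) <;> omega
  · rintro ⟨⟨hk0, hkn⟩, hk, hk'⟩
    rcases hk0.lt_or_gt with hneg | hpos
    · exact .inr ⟨((n : ℤ) - 1 + k).toNat, by omega, by omega⟩
    · exact .inl ⟨(k - 1).toNat, by omega, by omega⟩

lemma nodup_idxList (n : ℕ) : (idxList n).Nodup := by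
  simp only [idxList, List.pure_def, List.bind_eq_flatMap, ← List.map_eq_flatMap, List.map_map,
    List.nodup_append, List.mem_map, List.mem_range, Function.comp_def]
  refine ⟨List.nodup_range.map fun a b h => ?_, List.nodup_range.map fun a b h => ?_, ?_⟩
  · simp only [add_left_inj, Nat.cast_inj] at h
    exact h
  · simp only [neg_inj, sub_right_inj, Nat.cast_inj] at h
    exact h
  · rintro _ ⟨a, ha, rfl⟩ _ ⟨b, hb, hab⟩
    omega

section OrderedProduct

variable {G : Type*} [Group G] {C : Subgroup G}

lemma exists_mem_prod_mul_eq_mul_mul_prod {y : G} :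
    ∀ {gs : List G},
      (∀ g ∈ gs, g ∈ Subgroup.centralizer (C : Set G) ∧ ⁅g, y⁆ ∈ C) →
      ∃ c ∈ C, gs.prod * y = c * (y * gs.prod)
  | [], _ => ⟨1, C.one_mem, by simp⟩
  | g :: gs, h => by
    obtain ⟨c, hc, hgs⟩ :=
      exists_mem_prod_mul_eq_mul_mul_prod fun g' hg' => h g' (List.mem_cons_of_mem g hg')
    obtain ⟨hgC, hgy⟩ := h g List.mem_cons_self
    refine ⟨c * ⁅g, y⁆, C.mul_mem hc hgy, ?_⟩
    rw [List.prod_cons, mul_assoc, hgs, ← mul_assoc g c,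
      ← Subgroup.mem_centralizer_iff.mp hgC c hc, commutatorElement_def]
    group

variable {ι A : Type*} [AddGroup A] {x : ι → A → G} {l₀ : List ι}

lemma exists_mem_prod_mul_eq_mul_prod_update [DecidableEq ι]
    (hadd : ∀ i ∈ l₀, ∀ a b, x i a * x i b = x i (a + b))
    (hcent : ∀ i ∈ l₀, ∀ a, x i a ∈ Subgroup.centralizer (C : Set G))
    (hcomm : ∀ i ∈ l₀, ∀ j ∈ l₀, ∀ a b, ⁅x i a, x j b⁆ ∈ C)
    {l : List ι} (hl : l ⊆ l₀) (hnd : l.Nodup) (a : ι → A) {k : ι} (hk : k ∈ l) (b : A) :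
    ∃ c ∈ C, (l.map fun i => x i (a i)).prod * x k b
      = c * (l.map fun i => x i (Function.update a k (a k + b) i)).prod := by
  induction l with
  | nil => simp at hk
  | cons h t ih =>
    obtain ⟨hh, ht⟩ := List.cons_subset.mp hl
    obtain ⟨hht, hndt⟩ := List.nodup_cons.mp hnd
    simp only [List.map_cons, List.prod_cons]
    rcases eq_or_ne h k with rfl | hhk
    · obtain ⟨c, hc, hmove⟩ := exists_mem_prod_mul_eq_mul_mul_prod (C := C)
        (y := x h b) (gs := t.map fun i => x i (a i)) (by
          simp only [List.mem_map]
          rintro _ ⟨i, hi, rfl⟩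
          exact ⟨hcent i (ht hi) _, hcomm i (ht hi) h hh _ _⟩)
      have hupd : (t.map fun i => x i (Function.update a h (a h + b) i))
          = t.map fun i => x i (a i) :=
        List.map_congr_left fun i hi => by rw [Function.update_of_ne (ne_of_mem_of_not_mem hi hht)]
      refine ⟨c, hc, ?_⟩
      rw [hupd, Function.update_self, ← hadd h hh, mul_assoc, hmove, ← mul_assoc (x h (a h)),
        ← Subgroup.mem_centralizer_iff.mp (hcent h hh _) c hc]
      group
    · obtain ⟨c, hc, hih⟩ := ih ht hndt (List.mem_of_ne_of_mem hhk.symm hk)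
      refine ⟨c, hc, ?_⟩
      rw [Function.update_of_ne hhk, mul_assoc, hih, ← mul_assoc, ← mul_assoc,
        Subgroup.mem_centralizer_iff.mp (hcent h hh _) c hc]

def orderedProducts (C : Subgroup G) (x : ι → A → G) (l : List ι) : Set G :=
  {g | ∃ c ∈ C, ∃ a : ι → A, (∀ i ∉ l, a i = 0) ∧
    g = c * (l.map fun i => x i (a i)).prod}

lemma one_mem_orderedProducts {l : List ι} (hzero : ∀ i ∈ l, x i 0 = 1) :
    1 ∈ orderedProducts C x l := by
  refine ⟨1, C.one_mem, 0, fun _ _ => rfl, ?_⟩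
  rw [one_mul, List.prod_eq_one]
  simp only [List.mem_map]
  rintro _ ⟨i, hi, rfl⟩
  exact hzero i hi

lemma mul_mem_orderedProducts_of_mem {l : List ι}
    (hcent : ∀ i ∈ l, ∀ a, x i a ∈ Subgroup.centralizer (C : Set G))
    {g y : G} (hg : g ∈ orderedProducts C x l) (hy : y ∈ C) :
    g * y ∈ orderedProducts C x l := by
  obtain ⟨c, hc, a, ha, rfl⟩ := hg
  have hP : (l.map fun i => x i (a i)).prod ∈ Subgroup.centralizer (C : Set G) :=
    Subgroup.list_prod_mem _ (by
      simp only [List.mem_map]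
      rintro _ ⟨i, hi, rfl⟩
      exact hcent i hi _)
  refine ⟨c * y, C.mul_mem hc hy, a, ha, ?_⟩
  rw [mul_assoc, ← Subgroup.mem_centralizer_iff.mp hP y hy, mul_assoc]

lemma mul_mem_orderedProducts [DecidableEq ι] {l : List ι} (hnd : l.Nodup)
    (hadd : ∀ i ∈ l, ∀ a b, x i a * x i b = x i (a + b))
    (hcent : ∀ i ∈ l, ∀ a, x i a ∈ Subgroup.centralizer (C : Set G))
    (hcomm : ∀ i ∈ l, ∀ j ∈ l, ∀ a b, ⁅x i a, x j b⁆ ∈ C)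
    {g : G} (hg : g ∈ orderedProducts C x l) {k : ι} (hk : k ∈ l) (b : A) :
    g * x k b ∈ orderedProducts C x l := by
  obtain ⟨c, hc, a, ha, rfl⟩ := hg
  obtain ⟨c', hc', hP⟩ := exists_mem_prod_mul_eq_mul_prod_update hadd hcent hcomm
    (List.Subset.refl l) hnd a hk b
  refine ⟨c * c', C.mul_mem hc hc', _, fun i hi => ?_, by rw [mul_assoc, hP, mul_assoc]⟩
  rw [Function.update_of_ne (ne_of_mem_of_not_mem hk hi).symm, ha i hi]

lemma closure_subset_orderedProducts [DecidableEq ι] {l : List ι} (hnd : l.Nodup)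
    (hadd : ∀ i ∈ l, ∀ a b, x i a * x i b = x i (a + b))
    (hcent : ∀ i ∈ l, ∀ a, x i a ∈ Subgroup.centralizer (C : Set G))
    (hcomm : ∀ i ∈ l, ∀ j ∈ l, ∀ a b, ⁅x i a, x j b⁆ ∈ C)
    {s : Set G} (hs : ∀ g ∈ s, g ∈ C ∨ ∃ i ∈ l, ∃ a, g = x i a) :
    (Subgroup.closure s : Set G) ⊆ orderedProducts C x l := by
  have hzero : ∀ i ∈ l, x i 0 = 1 := fun i hi =>
    mul_eq_left.mp ((hadd i hi 0 0).trans (congrArg (x i) (add_zero 0)))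
  have hinv : ∀ g ∈ s, g⁻¹ ∈ C ∨ ∃ i ∈ l, ∃ a, g⁻¹ = x i a := by
    intro g hg
    rcases hs g hg with hgC | ⟨i, hi, a, rfl⟩
    · exact .inl (C.inv_mem hgC)
    · refine .inr ⟨i, hi, -a, (eq_inv_of_mul_eq_one_left ?_).symm⟩
      rw [hadd i hi, neg_add_cancel, hzero i hi]
  have hmul : ∀ g y : G, g ∈ orderedProducts C x l →
      (y ∈ C ∨ ∃ i ∈ l, ∃ a, y = x i a) → g * y ∈ orderedProducts C x l := by
    rintro g y hg (hy | ⟨k, hk, b, rfl⟩)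
    · exact mul_mem_orderedProducts_of_mem hcent hg hy
    · exact mul_mem_orderedProducts hnd hadd hcent hcomm hg hk b
  intro g hg
  induction hg using Subgroup.closure_induction_right with
  | one => exact one_mem_orderedProducts hzero
  | mul_right g _ y hy ih => exact hmul g y ih (hs y hy)
  | mul_inv_cancel g _ y hy ih => exact hmul g y⁻¹ ih (hinv y hy)

end OrderedProduct

namespace StURels

variable {m : ℕ∞} {f : AntiHermitianForm R pi V} {L : OddFormParameter f}
  {G : Type*} [Group G] (S : StURels m f L G)

lemma Y_zero {i : ℤ} (hi : i ∈ Omega m) : S.Y i (0, 0) = 1 := by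
  have h := S.rel2 i hi _ _ L.zero_mem L.zero_mem
  rwa [hAdd_zero_zero, mul_eq_left] at h

def ySubgroup {i : ℤ} (hi : i ∈ Omega m) : Subgroup G where
  carrier := S.Y i '' L.carrier
  mul_mem' := by
    rintro _ _ ⟨ξ, hξ, rfl⟩ ⟨ζ, hζ, rfl⟩
    exact ⟨_, L.add_mem _ _ hξ hζ, (S.rel2 i hi ξ ζ hξ hζ).symm⟩
  one_mem' := ⟨_, L.zero_mem, S.Y_zero hi⟩
  inv_mem' := by
    rintro _ ⟨ξ, hξ, rfl⟩
    refine ⟨_, L.inv_mem _ hξ, eq_inv_of_mul_eq_one_left ?_⟩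
    rw [S.rel2 i hi _ _ (L.inv_mem _ hξ) hξ, hAdd_hInv_self, S.Y_zero hi]

lemma X_mem_centralizer_ySubgroup {i j : ℤ} (hi : i ∈ Omega m)
    (hj : j ∈ Omega m ∧ j ≠ i ∧ j ≠ -i) (a : R) :
    S.X i j a ∈ Subgroup.centralizer (S.ySubgroup hi : Set G) := by
  rw [Subgroup.mem_centralizer_iff]
  rintro _ ⟨ξ, hξ, rfl⟩
  exact commutatorElement_eq_one_iff_mul_comm.mp
    (S.rel4 i i j hi hi hj.1 hj.2.1 hj.2.2 (ne_neg_of_mem_Omega hi) hj.2.1 ξ hξ a)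

lemma commutator_X_X_mem_ySubgroup {i j k : ℤ} (hi : i ∈ Omega m)
    (hj : j ∈ Omega m ∧ j ≠ i ∧ j ≠ -i) (hk : k ∈ Omega m ∧ k ≠ i ∧ k ≠ -i)
    (a b : R) :
    ⁅S.X i j a, S.X i k b⁆ ∈ S.ySubgroup hi := by
  rcases eq_or_ne k j with rfl | hkj
  · rw [commutatorElement_eq_one_iff_mul_comm.mpr (by
      rw [S.rel1 i k hi hk.1 hk.2.1 hk.2.2, S.rel1 i k hi hk.1 hk.2.1 hk.2.2, add_comm])]
    exact one_mem _
  rcases eq_or_ne k (-j) with rfl | hknj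
  · rw [S.rel0 i (-j) hi hk.1 hk.2.1 hk.2.2 b, neg_neg, S.rel9 i j hi hj.1 hj.2.1 hj.2.2]
    exact ⟨_, L.rel9_rhs_mem hi.1 _ _, rfl⟩
  · rw [S.rel3 i j i k hi hj.1 hi hk.1 hj.2.1 hj.2.2 hk.2.1 hk.2.2 hj.2.1.symm
      (ne_neg_of_mem_Omega hi) hk.2.1 hknj]
    exact one_mem _

end StURels

lemma exists_eq_Y_mul_prod_of_mem_U1 {f : AntiHermitianForm R pi V} {L : OddFormParameter f}
    {n : ℕ} (hn : 0 < n) {G : Type u} [Group G] (S : StURels (n : ℕ∞) f L G) {x : G}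
    (hx : x ∈ U1 S) :
    ∃ ξ ∈ L.carrier, ∃ a : ℤ → R, (∀ i ∉ idxList n, a i = 0) ∧
      x = S.Y n ξ * ((idxList n).map fun i => S.X n i (a i)).prod := by
  have hnΩ : (n : ℤ) ∈ Omega (n : ℕ∞) := mem_Omega_iff.mpr ⟨by omega, by simp⟩
  obtain ⟨_, ⟨ξ, hξ, rfl⟩, a, ha, rfl⟩ := closure_subset_orderedProducts
    (C := S.ySubgroup hnΩ) (nodup_idxList n)
    (fun i hi => S.rel1 n i hnΩ (mem_idxList_iff.mp hi).1 (mem_idxList_iff.mp hi).2.1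
      (mem_idxList_iff.mp hi).2.2)
    (fun i hi => S.X_mem_centralizer_ySubgroup hnΩ (mem_idxList_iff.mp hi))
    (fun i hi j hj => S.commutator_X_X_mem_ySubgroup hnΩ (mem_idxList_iff.mp hi)
      (mem_idxList_iff.mp hj))
    (by
      rintro g (⟨i, hi, a, rfl⟩ | ⟨ξ, hξ, rfl⟩)
      · exact .inr ⟨i, mem_idxList_iff.mpr hi, a, rfl⟩
      · exact .inl ⟨ξ, hξ, rfl⟩)
    hx
  exact ⟨ξ, hξ, a, ha, rfl⟩

section HyperbolicSpace

variable {n : ℕ} {f : AntiHermitianForm R pi V}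

def crd (n : ℕ) (k : ℤ) : Wm n R V →+ R where
  toFun w := cf w.1 k
  map_zero' := by by_cases h : k ∈ Omega (n : ℕ∞) <;> simp [cf, h]
  map_add' x y := by by_cases h : k ∈ Omega (n : ℕ∞) <;> simp [cf, h]

lemma crd_smul (k : ℤ) (r : R) (w : Wm n R V) : crd n k (op r • w) = crd n k w * r := by
  by_cases h : k ∈ Omega (n : ℕ∞) <;> simp [crd, cf, h]

lemma crd_ebas {k : ℤ} (hk : k ∈ Omega (n : ℕ∞)) (j : ℤ) :
    crd n k (ebas n R V j) = if k = j then 1 else 0 := by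
  simp [crd, cf, ebas, hk]

lemma crd_embV (k : ℤ) (u : V) : crd n k (embV n R u) = 0 := by
  by_cases h : k ∈ Omega (n : ℕ∞) <;> simp [crd, cf, embV, h]

lemma BW_embV (u : V) (w : Wm n R V) : BW n f (embV n R u) w = f.B u w.2 := by
  rw [BW, Finset.sum_eq_zero, zero_add]
  · rfl
  · intro i _
    simp [embV, cf, pi.bar_zero]

lemma BW_ebas_of_pos {i : ℤ} (hi : 0 < i) (hin : i ≤ n) (w : Wm n R V) :
    BW n f (ebas n R V i) w = crd n (-i) w := by
  have hΩ : ∀ k ∈ Finset.Icc (1 : ℤ) n,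
      k ∈ Omega (n : ℕ∞) ∧ -k ∈ Omega (n : ℕ∞) := by
    intro k hk
    have := Finset.mem_Icc.mp hk
    exact ⟨mem_Omega_iff.mpr ⟨by omega, by omega⟩,
      mem_Omega_iff.mpr ⟨by omega, by omega⟩⟩
  have hi' : i ∈ Finset.Icc (1 : ℤ) n := Finset.mem_Icc.mpr ⟨hi, hin⟩
  have hneg : ∀ k ∈ Finset.Icc (1 : ℤ) n, cf (ebas n R V i).1 (-k) = 0 := fun k hk => by
    simp [cf, ebas, (hΩ k hk).2, show -k ≠ i by have := (Finset.mem_Icc.mp hk).1; omega]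
  rw [BW, Finset.sum_eq_single_of_mem i hi' fun k hk hki => by
    rw [hneg k hk, pi.bar_zero]
    simp [cf, ebas, (hΩ k hk).1, hki, pi.bar_zero]]
  rw [hneg i hi', pi.bar_zero]
  simp [cf, ebas, (hΩ i hi').1, pi.bar_one_e, f.zero_left, crd]

lemma TijFun_snd (i j : ℤ) (c : R) (w : Wm n R V) : (TijFun n f i j c w).2 = w.2 := by
  simp [TijFun, ebas]

lemma crd_TijFun {i : ℤ} (hi : 0 < i) (hin : i ≤ n) (j : ℤ) (c : R) (w : Wm n R V) {k : ℤ}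
    (hk : k ∈ Omega (n : ℕ∞)) (hki : k ≠ i) :
    crd n k (TijFun n f i j c w)
      = crd n k w + if k = -j then epsI pi (-j) * pi.bar c * pi.e * crd n (-i) w else 0 := by
  rw [TijFun, map_sub, map_add, crd_smul, crd_smul, crd_ebas hk, crd_ebas hk, if_neg hki,
    BW_ebas_of_pos hi hin]
  split_ifs <;> simp

variable {X : ℤ → R → Wm n R V ≃ₗ[Rᵐᵒᵖ] Wm n R V} {l : List ℤ}

lemma prod_TijFun_snd {i : ℤ} (hX : ∀ j ∈ l, ∀ c w, X j c w = TijFun n f i j c w)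
    (a : ℤ → R) (w : Wm n R V) : ((l.map fun j => X j (a j)).prod w).2 = w.2 := by
  induction l with
  | nil => rfl
  | cons h t ih =>
    rw [List.map_cons, List.prod_cons, LinearEquiv.mul_apply, hX h List.mem_cons_self,
      TijFun_snd, ih fun j hj => hX j (List.mem_cons_of_mem h hj)]

lemma crd_neg_prod_TijFun {i : ℤ} (hi : 0 < i) (hin : i ≤ n) (hl : ∀ j ∈ l, j ≠ i)
    (hX : ∀ j ∈ l, ∀ c w, X j c w = TijFun n f i j c w) (a : ℤ → R) (w : Wm n R V) :
    crd n (-i) ((l.map fun j => X j (a j)).prod w) = crd n (-i) w := by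
  induction l with
  | nil => rfl
  | cons h t ih =>
    have hh := hl h List.mem_cons_self
    rw [List.map_cons, List.prod_cons, LinearEquiv.mul_apply, hX h List.mem_cons_self,
      crd_TijFun hi hin _ _ _ (mem_Omega_iff.mpr ⟨by omega, by omega⟩) (by omega),
      if_neg (by omega), add_zero, ih (fun j hj => hl j (List.mem_cons_of_mem h hj))
        fun j hj => hX j (List.mem_cons_of_mem h hj)]

lemma crd_neg_prod_TijFun_of_ne {i : ℤ} (hi : 0 < i) (hin : i ≤ n) (hnd : l.Nodup)
    (hl : ∀ j ∈ l, j ≠ i) (hX : ∀ j ∈ l, ∀ c w, X j c w = TijFun n f i j c w)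
    (a : ℤ → R)
    (w : Wm n R V) {k : ℤ} (hk : k ∈ Omega (n : ℕ∞)) (hki : k ≠ -i) :
    crd n (-k) ((l.map fun j => X j (a j)).prod w) = crd n (-k) w
      + if k ∈ l then epsI pi (-k) * pi.bar (a k) * pi.e * crd n (-i) w else 0 := by
  induction l with
  | nil => simp
  | cons h t ih =>
    obtain ⟨hht, hndt⟩ := List.nodup_cons.mp hnd
    have hlt : ∀ j ∈ t, j ≠ i := fun j hj => hl j (List.mem_cons_of_mem h hj)
    have hXt : ∀ j ∈ t, ∀ c w, X j c w = TijFun n f i j c w :=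
      fun j hj => hX j (List.mem_cons_of_mem h hj)
    rw [List.map_cons, List.prod_cons, LinearEquiv.mul_apply, hX h List.mem_cons_self,
      crd_TijFun hi hin _ _ _ (neg_mem_Omega hk) (by omega), ih hndt hlt hXt,
      crd_neg_prod_TijFun hi hin hlt hXt]
    by_cases hkh : k = h
    · subst hkh
      simp [hht]
    · simp [hkh]

lemma crd_neg_prod_TijFun_apply_ebas_neg {i : ℤ} (hi : 0 < i) (hin : i ≤ n) (hnd : l.Nodup)
    (hl : ∀ j ∈ l, j ∈ Omega (n : ℕ∞) ∧ j ≠ i ∧ j ≠ -i)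
    (hX : ∀ j ∈ l, ∀ c w, X j c w = TijFun n f i j c w) (a : ℤ → R) {k : ℤ}
    (hk : k ∈ l) : crd n (-k) ((l.map fun j => X j (a j)).prod (ebas n R V (-i)))
      = epsI pi (-k) * pi.bar (a k) * pi.e := by
  have hiΩ : -i ∈ Omega (n : ℕ∞) := mem_Omega_iff.mpr ⟨by omega, by omega⟩
  have hki : -k ≠ -i := by have := (hl k hk).2.1; omega
  rw [crd_neg_prod_TijFun_of_ne hi hin hnd (fun j hj => (hl j hj).2.1) hX a _ (hl k hk).1
      (hl k hk).2.2, crd_ebas (neg_mem_Omega (hl k hk).1), crd_ebas hiΩ]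
  simp only [hki, hk, ↓reduceIte, zero_add, mul_one]

lemma TiFun_apply_of_snd_eq_zero {i : ℤ} (hi : 0 < i) (hin : i ≤ n) {w : Wm n R V}
    (hw₂ : w.2 = 0) (hw : crd n (-i) w = 1) (u : V) (b : R) :
    TiFun n f i u b w
      = w - op (epsI pi i * b * epsI pi (-i)) • ebas n R V i
        + op (epsI pi (-i)) • embV n R u := by
  rw [TiFun, BW_embV, BW_ebas_of_pos hi hin, hw₂, hw, f.zero_right]
  simp

lemma eq_of_TiFun_mul_prod_eq {i : ℤ} (hi : 0 < i) (hin : i ≤ n) (hnd : l.Nodup)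
    (hl : ∀ j ∈ l, j ∈ Omega (n : ℕ∞) ∧ j ≠ i ∧ j ≠ -i)
    (hX : ∀ j ∈ l, ∀ c w, X j c w = TijFun n f i j c w)
    {Y Y' : Wm n R V ≃ₗ[Rᵐᵒᵖ] Wm n R V} {u u' : V} {b b' : R}
    (hY : ∀ w, Y w = TiFun n f i u b w) (hY' : ∀ w, Y' w = TiFun n f i u' b' w)
    {a a' : ℤ → R} (ha : ∀ j ∉ l, a j = 0) (ha' : ∀ j ∉ l, a' j = 0)
    (h : Y * (l.map fun j => X j (a j)).prod = Y' * (l.map fun j => X j (a' j)).prod) :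
    u = u' ∧ b = b' ∧ a = a' := by
  have hiΩ : i ∈ Omega (n : ℕ∞) := mem_Omega_iff.mpr ⟨by omega, by omega⟩
  have hlt : ∀ j ∈ l, j ≠ i := fun j hj => (hl j hj).2.1
  set v := fun a : ℤ → R => (l.map fun j => X j (a j)).prod (ebas n R V (-i)) with hv
  have hv₂ : ∀ a, (v a).2 = 0 := fun a => prod_TijFun_snd hX a _
  have hv₁ : ∀ a, crd n (-i) (v a) = 1 := fun a => by
    rw [hv, crd_neg_prod_TijFun hi hin hlt hX, crd_ebas (neg_mem_Omega hiΩ), if_pos rfl]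
  have hvk : ∀ a, ∀ k ∈ l, crd n (-k) (v a) = epsI pi (-k) * pi.bar (a k) * pi.e :=
    fun a k hk => crd_neg_prod_TijFun_apply_ebas_neg hi hin hnd hl hX a hk
  have happ : TiFun n f i u b (v a) = TiFun n f i u' b' (v a') := by
    rw [← hY, ← hY', hv, ← LinearEquiv.mul_apply, h, LinearEquiv.mul_apply]
  rw [TiFun_apply_of_snd_eq_zero hi hin (hv₂ a) (hv₁ a),
    TiFun_apply_of_snd_eq_zero hi hin (hv₂ a') (hv₁ a')] at happ
  have hu : u = u' := by
    have h₂ := congrArg Prod.snd happ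
    simp only [Prod.snd_add, Prod.snd_sub, Prod.smul_snd, hv₂, ebas, embV, smul_zero,
      sub_zero, zero_add] at h₂
    exact (isUnit_epsI (-i)).op.smul_left_cancel.mp h₂
  have haa : a = a' := by
    funext k
    by_cases hk : k ∈ l
    · have hk' := congrArg (crd n (-k)) happ
      simp only [map_add, map_sub, crd_smul, crd_ebas (neg_mem_Omega (hl k hk).1), crd_embV,
        hvk _ k hk, if_neg (show -k ≠ i by have := (hl k hk).2.2; omega), zero_mul,
        sub_zero, add_zero] at hk'
      exact pi.bar_injective
        ((isUnit_epsI _).mul_left_cancel (pi.isUnit_e.mul_right_cancel hk'))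
    · rw [ha k hk, ha' k hk]
  subst hu haa
  refine ⟨rfl, ?_, rfl⟩
  have hb := congrArg (crd n i) happ
  simp only [map_add, map_sub, crd_smul, crd_ebas hiΩ, crd_embV, ↓reduceIte, one_mul, zero_mul,
    add_zero, sub_right_inj] at hb
  exact (isUnit_epsI i).mul_left_cancel ((isUnit_epsI (-i)).mul_right_cancel hb)

end HyperbolicSpace

theorem U1_iso_general (f : AntiHermitianForm R pi V) (L : OddFormParameter f)
    (n : ℕ) (hn : 3 ≤ n)
    {G : Type u} [Group G] (S : StURels (n : ℕ∞) f L G)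
    (T : StURels (n : ℕ∞) f L (Wm n R V ≃ₗ[Rᵐᵒᵖ] Wm n R V))
    (hTX : ∀ i j : ℤ, i ∈ Omega (n : ℕ∞) → j ∈ Omega (n : ℕ∞) → j ≠ i → j ≠ -i →
      ∀ (a : R) (w : Wm n R V), T.X i j a w = TijFun n f i j a w)
    (hTY : ∀ i : ℤ, i ∈ Omega (n : ℕ∞) → ∀ (u : V) (b : R), (u, b) ∈ L.carrier →
      ∀ w : Wm n R V, T.Y i (u, b) w = TiFun n f i u b w)
    (φ : G →* (Wm n R V ≃ₗ[Rᵐᵒᵖ] Wm n R V))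
    (hφX : ∀ i j : ℤ, i ∈ Omega (n : ℕ∞) → j ∈ Omega (n : ℕ∞) → j ≠ i → j ≠ -i →
      ∀ a : R, φ (S.X i j a) = T.X i j a)
    (hφY : ∀ i : ℤ, i ∈ Omega (n : ℕ∞) → ∀ ξ ∈ L.carrier, φ (S.Y i ξ) = T.Y i ξ)
    :
    (∀ x ∈ U1 S, ∀ y ∈ U1 S, φ x = φ y → x = y) ∧
    (∀ x ∈ U1 S, ∃! p : (V × R) × (ℤ → R),
      (p.1 ∈ L.carrier ∧ ∀ i : ℤ, i ∉ idxList n → p.2 i = 0) ∧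
      x = S.Y (n : ℤ) p.1 * ((idxList n).map fun i => S.X (n : ℤ) i (p.2 i)).prod) := by
  have hn0 : 0 < n := by omega
  have hnΩ : (n : ℤ) ∈ Omega (n : ℕ∞) := mem_Omega_iff.mpr ⟨by omega, by simp⟩
  have hl := fun i (hi : i ∈ idxList n) => mem_idxList_iff.mp hi
  have hφ : ∀ ξ ∈ L.carrier, ∀ a : ℤ → R,
      φ (S.Y n ξ * ((idxList n).map fun i => S.X n i (a i)).prod)
        = T.Y n ξ * ((idxList n).map fun i => T.X n i (a i)).prod := fun ξ hξ a => by
    rw [map_mul, map_list_prod, List.map_map, hφY n hnΩ ξ hξ]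
    congr 2
    exact List.map_congr_left fun i hi =>
      hφX n i hnΩ (hl i hi).1 (hl i hi).2.1 (hl i hi).2.2 (a i)
  have hinj : ∀ ξ ∈ L.carrier, ∀ ζ ∈ L.carrier, ∀ a a' : ℤ → R,
      (∀ i ∉ idxList n, a i = 0) → (∀ i ∉ idxList n, a' i = 0) →
      φ (S.Y n ξ * ((idxList n).map fun i => S.X n i (a i)).prod)
        = φ (S.Y n ζ * ((idxList n).map fun i => S.X n i (a' i)).prod) →
      ξ = ζ ∧ a = a' := by
    intro ξ hξ ζ hζ a a' ha ha' h
    rw [hφ ξ hξ, hφ ζ hζ] at h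
    obtain ⟨hu, hb, rfl⟩ := eq_of_TiFun_mul_prod_eq (by omega) le_rfl (nodup_idxList n) hl
      (fun j hj => hTX n j hnΩ (hl j hj).1 (hl j hj).2.1 (hl j hj).2.2)
      (hTY n hnΩ ξ.1 ξ.2 hξ) (hTY n hnΩ ζ.1 ζ.2 hζ) ha ha' h
    exact ⟨Prod.ext hu hb, rfl⟩
  refine ⟨fun x hx y hy hxy => ?_, fun x hx => ?_⟩
  · obtain ⟨ξ, hξ, a, ha, rfl⟩ := exists_eq_Y_mul_prod_of_mem_U1 hn0 S hx
    obtain ⟨ζ, hζ, a', ha', rfl⟩ := exists_eq_Y_mul_prod_of_mem_U1 hn0 S hy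
    obtain ⟨rfl, rfl⟩ := hinj ξ hξ ζ hζ a a' ha ha' hxy
    rfl
  · obtain ⟨ξ, hξ, a, ha, rfl⟩ := exists_eq_Y_mul_prod_of_mem_U1 hn0 S hx
    refine ⟨(ξ, a), ⟨⟨hξ, ha⟩, rfl⟩, ?_⟩
    rintro ⟨ζ, a'⟩ ⟨⟨hζ, ha'⟩, h⟩
    obtain ⟨rfl, rfl⟩ := hinj ζ hζ ξ hξ a' a ha' ha (congrArg φ h).symm
    rfl

/-- The natural epimorphism `StU(2n,R,𝔏) → EU(2n,R,𝔏)` (here `φ`, the map to the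
unitary group sending generators to the elementary transvections) restricts to an
isomorphism of `ᵚᵗᵘU₁` onto its image `ᵉᵘU₁`; in particular every element of
`ᵚᵗᵘU₁` has a unique decomposition `X_n(ζ)·X_{n,1}(a₁)·…·X_{n,−1}(a₋₁)`. -/
theorem U1_iso (f : AntiHermitianForm R pi V) (L : OddFormParameter f)
    (n : ℕ) (hn : 3 ≤ n)
    {G : Type u} [Group G] (S : StURels (n : ℕ∞) f L G) (hS : IsStU S)
    (T : StURels (n : ℕ∞) f L (Wm n R V ≃ₗ[Rᵐᵒᵖ] Wm n R V))
    (hTX : ∀ i j : ℤ, i ∈ Omega (n : ℕ∞) → j ∈ Omega (n : ℕ∞) → j ≠ i → j ≠ -i →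
      ∀ (a : R) (w : Wm n R V), T.X i j a w = TijFun n f i j a w)
    (hTY : ∀ i : ℤ, i ∈ Omega (n : ℕ∞) → ∀ (u : V) (b : R), (u, b) ∈ L.carrier →
      ∀ w : Wm n R V, T.Y i (u, b) w = TiFun n f i u b w)
    (φ : G →* (Wm n R V ≃ₗ[Rᵐᵒᵖ] Wm n R V))
    (hφX : ∀ i j : ℤ, i ∈ Omega (n : ℕ∞) → j ∈ Omega (n : ℕ∞) → j ≠ i → j ≠ -i →
      ∀ a : R, φ (S.X i j a) = T.X i j a)
    (hφY : ∀ i : ℤ, i ∈ Omega (n : ℕ∞) → ∀ ξ ∈ L.carrier, φ (S.Y i ξ) = T.Y i ξ)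
    :
    (∀ x ∈ U1 S, ∀ y ∈ U1 S, φ x = φ y → x = y) ∧
    (∀ x ∈ U1 S, ∃! p : (V × R) × (ℤ → R),
      (p.1 ∈ L.carrier ∧ ∀ i : ℤ, i ∉ idxList n → p.2 i = 0) ∧
      x = S.Y (n : ℤ) p.1 * ((idxList n).map fun i => S.X (n : ℤ) i (p.2 i)).prod) :=
  U1_iso_general f L n hn S T hTX hTY φ hφX hφY
end
end

section
/- For n ≥ 3, the odd unitary Steinberg group StU(2n,R,𝔏) is generated by the two subgroups U₁^StU(2n,R,𝔏) = ⟨X_{n,i}(a), X_n(ζ) : i ∈ Ω∖{±n}, a ∈ R, ζ ∈ 𝔏⟩ and U₁⁻^StU(2n,R,𝔏) = ⟨X_{−n,i}(a), X_{−n}(ζ) : i ∈ Ω∖{±n}, a ∈ R, ζ ∈ 𝔏⟩. -/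
open MulOpposite
open scoped commutatorElement

universe u

variable {R : Type u} [Ring R] {pi : PseudoInvolution R}
variable {V : Type u} [AddCommGroup V] [Module Rᵐᵒᵖ V]

/-!
The subgroup `K` generated by `U₁` and `U₁⁻` already contains every Steinberg generator:
`X_{ij}` with `i, j ∉ {±n}` is the commutator `[X_{in}(a), X_{nj}(1)]` (R5), where `X_{in}` is a
generator of `U₁⁻` rewritten by R0, and `X_i(ξ)` is recovered from the commutator
`[X_n(ζ), X_{−n,−i}(1)]` by R8. Restricting the generators to `K` therefore still satisfies
R0–R9, so the universal property yields a homomorphism `G →* K`; composed with the inclusion it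
fixes the generators, hence is the identity, and `K = ⊤`.
-/

lemma PseudoInvolution.bar_neg_s11 (pi : PseudoInvolution R) (a : R) :
    pi.bar (-a) = -pi.bar a :=
  (AddMonoidHom.mk' pi.bar pi.bar_add).map_neg a

lemma hAct_one (x : V × R) : hAct pi x 1 = x := by
  obtain ⟨u, a⟩ := x
  simp only [hAct, op_one, one_smul, mul_one, pi.bar_one_e, one_mul]

lemma OddFormParameter.mem_neg_bar {f : AntiHermitianForm R pi V}
    (L : OddFormParameter f) {u : V} {a : R} (h : (u, a) ∈ L.carrier) :
    (u, -pi.bar a) ∈ L.carrier := by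
  have hmax : a = pi.bar a + f.B u u := L.le_max _ h
  have hact : hAct pi (hInv f (u, a)) (-1) = (u, -pi.bar a) := by
    simp only [hAct, hInv, op_neg, op_one, neg_smul, one_smul, neg_neg, pi.bar_neg_s11,
      neg_mul, mul_neg_one, pi.bar_one_e, one_mul, Prod.mk.injEq, true_and]
    conv_lhs => rw [hmax]
    abel
  exact hact ▸ L.act_mem _ (L.inv_mem _ h) (-1)

lemma Omega.neg_mem {n : ℕ∞} {i : ℤ} (h : i ∈ Omega n) : -i ∈ Omega n :=
  ⟨neg_ne_zero.mpr h.1, by rw [Int.natAbs_neg]; exact h.2⟩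

lemma Subgroup.commutatorElement_mem {G : Type*} [Group G] {K : Subgroup G} {g h : G}
    (hg : g ∈ K) (hh : h ∈ K) : ⁅g, h⁆ ∈ K := by
  rw [commutatorElement_def]
  exact mul_mem (mul_mem (mul_mem hg hh) (inv_mem hg)) (inv_mem hh)

section CodRestrictOrOne

variable {G : Type*} [Group G] (K : Subgroup G)

open Classical in
noncomputable def Subgroup.codRestrictOrOne (g : G) : K :=
  if h : g ∈ K then ⟨g, h⟩ else 1

variable {K}

lemma Subgroup.coe_codRestrictOrOne {g : G} (hg : g ∈ K) :
    (K.codRestrictOrOne g : G) = g := by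
  rw [Subgroup.codRestrictOrOne, dif_pos hg]

lemma Subgroup.codRestrictOrOne_one : K.codRestrictOrOne 1 = 1 :=
  Subtype.ext (K.coe_codRestrictOrOne K.one_mem)

lemma Subgroup.codRestrictOrOne_mul {g h : G} (hg : g ∈ K) (hh : h ∈ K) :
    K.codRestrictOrOne (g * h) = K.codRestrictOrOne g * K.codRestrictOrOne h := by
  ext
  simp only [Subgroup.coe_mul, K.coe_codRestrictOrOne hg, K.coe_codRestrictOrOne hh,
    K.coe_codRestrictOrOne (K.mul_mem hg hh)]

lemma Subgroup.codRestrictOrOne_commutatorElement {g h : G} (hg : g ∈ K) (hh : h ∈ K) :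
    K.codRestrictOrOne ⁅g, h⁆ = ⁅K.codRestrictOrOne g, K.codRestrictOrOne h⁆ := by
  apply Subtype.ext
  rw [← K.coe_subtype, map_commutatorElement, K.coe_subtype, K.coe_codRestrictOrOne hg,
    K.coe_codRestrictOrOne hh,
    K.coe_codRestrictOrOne (Subgroup.commutatorElement_mem hg hh)]

end CodRestrictOrOne

namespace StURels

section CodRestrict

variable {n : ℕ∞} {f : AntiHermitianForm R pi V} {L : OddFormParameter f}
  {G : Type u} [Group G] (S : StURels n f L G) (K : Subgroup G)

noncomputable def codRestrict
    (hX : ∀ i j : ℤ, i ∈ Omega n → j ∈ Omega n → j ≠ i → j ≠ -i → ∀ a : R, S.X i j a ∈ K)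
    (hY : ∀ i : ℤ, i ∈ Omega n → ∀ ξ : V × R, ξ ∈ L.carrier → S.Y i ξ ∈ K) :
    StURels n f L K where
  X i j a := K.codRestrictOrOne (S.X i j a)
  Y i ξ := K.codRestrictOrOne (S.Y i ξ)
  rel0 i j hi hj h1 h2 a := congrArg K.codRestrictOrOne (S.rel0 i j hi hj h1 h2 a)
  rel1 i j hi hj h1 h2 a b := by
    rw [← Subgroup.codRestrictOrOne_mul (hX i j hi hj h1 h2 a) (hX i j hi hj h1 h2 b),
      S.rel1 i j hi hj h1 h2 a b]
  rel2 i hi ξ ζ hξ hζ := by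
    rw [← Subgroup.codRestrictOrOne_mul (hY i hi ξ hξ) (hY i hi ζ hζ), S.rel2 i hi ξ ζ hξ hζ]
  rel3 i j h k hi hj hh hk h1 h2 h3 h4 h5 h6 h7 h8 a b := by
    rw [← Subgroup.codRestrictOrOne_commutatorElement (hX i j hi hj h1 h2 a)
      (hX h k hh hk h3 h4 b), S.rel3 i j h k hi hj hh hk h1 h2 h3 h4 h5 h6 h7 h8 a b,
      Subgroup.codRestrictOrOne_one]
  rel4 i j k hi hj hk h1 h2 h3 h4 ξ hξ a := by
    rw [← Subgroup.codRestrictOrOne_commutatorElement (hY i hi ξ hξ) (hX j k hj hk h1 h2 a),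
      S.rel4 i j k hi hj hk h1 h2 h3 h4 ξ hξ a, Subgroup.codRestrictOrOne_one]
  rel5 i j k hi hj hk h1 h2 h3 h4 h5 h6 a b := by
    rw [← Subgroup.codRestrictOrOne_commutatorElement (hX i j hi hj h1 h2 a)
      (hX j k hj hk h3 h4 b), S.rel5 i j k hi hj hk h1 h2 h3 h4 h5 h6 a b]
  rel6 i j hi hj h1 h2 u a v b hu hv := by
    rw [← Subgroup.codRestrictOrOne_commutatorElement (hY i hi _ hu) (hY j hj _ hv),
      S.rel6 i j hi hj h1 h2 u a v b hu hv]
  rel7 i hi u a v b hu hv := by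
    rw [← Subgroup.codRestrictOrOne_commutatorElement (hY i hi _ hu) (hY i hi _ hv),
      S.rel7 i hi u a v b hu hv]
  rel8 i j hi hj h1 h2 u a hu b := by
    rw [← Subgroup.codRestrictOrOne_commutatorElement (hY i hi _ hu)
      (hX (-i) j (Omega.neg_mem hi) hj (by omega) (by omega) b),
      S.rel8 i j hi hj h1 h2 u a hu b, Subgroup.codRestrictOrOne_mul (hX i j hi hj h1 h2 _)
      (hY (-j) (Omega.neg_mem hj) _ (L.act_mem _ (L.mem_neg_bar hu) b))]
  rel9 i j hi hj h1 h2 a b := by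
    rw [← Subgroup.codRestrictOrOne_commutatorElement (hX i j hi hj h1 h2 a)
      (hX j (-i) hj (Omega.neg_mem hi) (by omega) (by omega) b), S.rel9 i j hi hj h1 h2 a b]

end CodRestrict

section Generation

variable {n : ℕ∞} {f : AntiHermitianForm R pi V} {L : OddFormParameter f}
  {G : Type u} [Group G] (S : StURels n f L G) {K : Subgroup G} {N : ℤ} (hN : N ∈ Omega n)
  (hXN : ∀ i : ℤ, i ∈ Omega n → i ≠ N → i ≠ -N → ∀ a : R, S.X N i a ∈ K)
  (hXNneg : ∀ i : ℤ, i ∈ Omega n → i ≠ N → i ≠ -N → ∀ a : R, S.X (-N) i a ∈ K)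
include hN hXNneg

lemma X_mem_of_snd_eq {i : ℤ} (hi : i ∈ Omega n) (hiN : i ≠ N) (hiN' : i ≠ -N) (a : R) :
    S.X i N a ∈ K := by
  rw [S.rel0 i N hi hN (Ne.symm hiN) (by omega) a]
  exact hXNneg (-i) (Omega.neg_mem hi) (by omega) (by omega) _

include hXN

lemma X_mem (i j : ℤ) (hi : i ∈ Omega n) (hj : j ∈ Omega n) (hji : j ≠ i) (hji' : j ≠ -i)
    (a : R) : S.X i j a ∈ K := by
  by_cases hiN : i = N
  · exact hiN ▸ hXN j hj (by omega) (by omega) a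
  by_cases hiN' : i = -N
  · exact hiN' ▸ hXNneg j hj (by omega) (by omega) a
  by_cases hjN : j = N
  · exact hjN ▸ S.X_mem_of_snd_eq hN hXNneg hi hiN hiN' a
  by_cases hjN' : j = -N
  · rw [hjN', S.rel0 i (-N) hi (Omega.neg_mem hN) (by omega) (by omega) a, neg_neg]
    exact hXN (-i) (Omega.neg_mem hi) (by omega) (by omega) _
  rw [← mul_one a, ← S.rel5 i N j hi hN hj (Ne.symm hiN) (by omega) hjN hjN' hji hji' a 1]
  exact Subgroup.commutatorElement_mem (S.X_mem_of_snd_eq hN hXNneg hi hiN hiN' a)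
    (hXN j hj hjN hjN' 1)

lemma Y_mem (hYN : ∀ ξ : V × R, ξ ∈ L.carrier → S.Y N ξ ∈ K)
    (hYNneg : ∀ ξ : V × R, ξ ∈ L.carrier → S.Y (-N) ξ ∈ K)
    (i : ℤ) (hi : i ∈ Omega n) (ξ : V × R) (hξ : ξ ∈ L.carrier) : S.Y i ξ ∈ K := by
  by_cases hiN : i = N
  · exact hiN ▸ hYN ξ hξ
  by_cases hiN' : i = -N
  · exact hiN' ▸ hYNneg ξ hξ
  obtain ⟨u, a⟩ := ξ
  have h8 := S.rel8 N (-i) hN (Omega.neg_mem hi) (by omega) (by omega) u (-pi.bar a)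
    (L.mem_neg_bar hξ) 1
  rw [neg_neg, pi.bar_neg_s11, neg_neg, pi.bar_bar, hAct_one] at h8
  have hX : S.X N (-i) (epsI pi N * -pi.bar a * 1) ∈ K :=
    hXN (-i) (Omega.neg_mem hi) (by omega) (by omega) _
  rw [← K.mul_mem_cancel_left hX, ← h8]
  exact Subgroup.commutatorElement_mem (hYN _ (L.mem_neg_bar hξ))
    (hXNneg (-i) (Omega.neg_mem hi) (by omega) (by omega) 1)

end Generation

end StURels

theorem IsStU.eq_top_of_generators_mem {n : ℕ∞} {f : AntiHermitianForm R pi V}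
    {L : OddFormParameter f} {G : Type u} [Group G] {S : StURels n f L G} (hS : IsStU S)
    {K : Subgroup G}
    (hX : ∀ i j : ℤ, i ∈ Omega n → j ∈ Omega n → j ≠ i → j ≠ -i → ∀ a : R, S.X i j a ∈ K)
    (hY : ∀ i : ℤ, i ∈ Omega n → ∀ ξ : V × R, ξ ∈ L.carrier → S.Y i ξ ∈ K) :
    K = ⊤ := by
  obtain ⟨φ, ⟨hφX, hφY⟩, -⟩ := hS K (S.codRestrict K hX hY)
  have hid : K.subtype.comp φ = MonoidHom.id G := (hS G S).unique
    ⟨fun i j hi hj h1 h2 a => by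
      rw [MonoidHom.comp_apply, hφX i j hi hj h1 h2 a]
      exact K.coe_codRestrictOrOne (hX i j hi hj h1 h2 a),
    fun i hi ξ hξ => by
      rw [MonoidHom.comp_apply, hφY i hi ξ hξ]
      exact K.coe_codRestrictOrOne (hY i hi ξ hξ)⟩
    ⟨fun _ _ _ _ _ _ _ => rfl, fun _ _ _ _ => rfl⟩
  refine eq_top_iff.mpr fun g _ => ?_
  rw [← MonoidHom.id_apply G g, ← hid]
  exact (φ g).2

/-- The odd unitary Steinberg group is generated by the subgroups
`ᵚᵗᵘU₁(2n,R,𝔏)` and `ᵚᵗᵘU₁⁻(2n,R,𝔏)`, i.e. by the generators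
`X_{n,i}(a), X_n(ζ), X_{−n,i}(a), X_{−n}(ζ)` with `i ∈ Ω ∖ {±n}`. -/
theorem stU_generated_by_U1_U1neg (f : AntiHermitianForm R pi V)
    (L : OddFormParameter f) (n : ℕ) (hn : 3 ≤ n)
    {G : Type u} [Group G] (S : StURels (n : ℕ∞) f L G) (hS : IsStU S) :
    Subgroup.closure
      ({g : G | ∃ i : ℤ, (i ∈ Omega (n : ℕ∞) ∧ i ≠ (n : ℤ) ∧ i ≠ -(n : ℤ)) ∧
          ∃ a : R, g = S.X (n : ℤ) i a} ∪
       {g : G | ∃ ξ ∈ L.carrier, g = S.Y (n : ℤ) ξ} ∪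
       {g : G | ∃ i : ℤ, (i ∈ Omega (n : ℕ∞) ∧ i ≠ (n : ℤ) ∧ i ≠ -(n : ℤ)) ∧
          ∃ a : R, g = S.X (-(n : ℤ)) i a} ∪
       {g : G | ∃ ξ ∈ L.carrier, g = S.Y (-(n : ℤ)) ξ}) = ⊤ := by
  have hN : (n : ℤ) ∈ Omega (n : ℕ∞) := ⟨by omega, by rw [Int.natAbs_natCast]⟩
  refine hS.eq_top_of_generators_mem (S.X_mem hN ?XN ?XNneg) (S.Y_mem hN ?XN ?XNneg ?YN ?YNneg)
  case XN => exact fun i hi h1 h2 a =>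
    Subgroup.subset_closure (.inl (.inl (.inl ⟨i, ⟨hi, h1, h2⟩, a, rfl⟩)))
  case XNneg => exact fun i hi h1 h2 a =>
    Subgroup.subset_closure (.inl (.inr ⟨i, ⟨hi, h1, h2⟩, a, rfl⟩))
  case YN => exact fun ξ hξ => Subgroup.subset_closure (.inl (.inl (.inr ⟨ξ, hξ, rfl⟩)))
  case YNneg => exact fun ξ hξ => Subgroup.subset_closure (.inr ⟨ξ, hξ, rfl⟩)
end

section
/- Let n ≥ 4 or n = ∞, and let ε be a central extension of StU(2n,R,𝔏) satisfying property (†). Then for all i ∈ Ω, j ∈ Ω∖{±i}, k ∈ Ω∖{−i, j}, h ∈ Ω∖{i, −j, ±k} and all a, b ∈ R, one has [ε⁻¹X_ij(a), ε⁻¹X_kh(b)] = 1. In particular, if n ≥ 5 or n = ∞, property (†) itself holds for every central extension of StU(2n,R,𝔏). -/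
open MulOpposite
open scoped commutatorElement

universe u

variable {R : Type u} [Ring R] {pi : PseudoInvolution R}
variable {V : Type u} [AddCommGroup V] [Module Rᵐᵒᵖ V]

/-- Property (†): preimages of `X_ij(a)` and `X_kh(b)` commute whenever the eight
indices `±i, ±j, ±k, ±h` are pairwise distinct. -/
def DaggerProp {n : ℕ∞} {f : AntiHermitianForm R pi V} {L : OddFormParameter f}
    {G : Type u} [Group G] (S : StURels n f L G)
    {H : Type u} [Group H] (ε : H →* G) : Prop :=
  ∀ i j k h : ℤ, i ∈ Omega n → j ∈ Omega n → k ∈ Omega n → h ∈ Omega n →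
    ({i, -i, j, -j, k, -k, h, -h} : Finset ℤ).card = 8 →
    ∀ a b : R, ∀ u v : H, ε u = S.X i j a → ε v = S.X k h b → ⁅u, v⁆ = 1

/-!
A preimage of `X_kh(b)` can be replaced, up to a central element, by the commutator of
preimages of `X_kl(b)` and `X_lh(1)` (relation R5), as soon as there is an index `l` with
`±l ∉ {±i, ±j, ±k, ±h}`. By R3 both of these commute with `X_ij(a)` in `StU`, so their
commutators with a preimage of `X_ij(a)` are central, and conjugation by that preimage fixes
their commutator. A fresh index exists when `±i, ±j, ±k, ±h` take at most seven values and
`n ≥ 4`, and always when `n ≥ 5`.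
-/

section CentralCommutators

variable {H : Type*} [Group H]

theorem commutatorElement_central_mul_left {z : H} (hz : z ∈ Subgroup.center H) (x w : H) :
    ⁅z * x, w⁆ = ⁅x, w⁆ := by
  have hzw : ⁅z, w⁆ = 1 :=
    commutatorElement_eq_one_iff_commute.mpr (Subgroup.mem_center_iff.mp hz w).symm
  rw [commutatorElement_mul_left_eq_conj_mul, hzw, mul_one,
    (Subgroup.mem_center_iff.mp hz _).symm, mul_inv_cancel_right]

theorem commutatorElement_central_mul_right {z : H} (hz : z ∈ Subgroup.center H) (x w : H) :
    ⁅x, z * w⁆ = ⁅x, w⁆ := by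
  rw [← commutatorElement_inv, commutatorElement_central_mul_left hz, commutatorElement_inv]

theorem commutatorElement_eq_one_of_mem_center {u v₁ v₂ v : H}
    (h₁ : ⁅u, v₁⁆ ∈ Subgroup.center H) (h₂ : ⁅u, v₂⁆ ∈ Subgroup.center H)
    (hv : ⁅v₁, v₂⁆⁻¹ * v ∈ Subgroup.center H) : ⁅u, v⁆ = 1 := by
  have conj_eq (x : H) : u * x * u⁻¹ = ⁅u, x⁆ * x := by group
  set z := ⁅v₁, v₂⁆⁻¹ * v with hz
  have hconj : u * v * u⁻¹ = v :=
    calc u * v * u⁻¹ = u * ⁅v₁, v₂⁆ * u⁻¹ * (u * z * u⁻¹) := by rw [hz]; group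
      _ = ⁅⁅u, v₁⁆ * v₁, ⁅u, v₂⁆ * v₂⁆ * z := by
        rw [conjugate_commutatorElement, conj_eq v₁, conj_eq v₂,
          Subgroup.mem_center_iff.mp hv u, mul_inv_cancel_right]
      _ = v := by
        rw [commutatorElement_central_mul_left h₁, commutatorElement_central_mul_right h₂, hz,
          mul_inv_cancel_left]
  rw [commutatorElement_def, hconj, mul_inv_cancel]

end CentralCommutators

theorem IsCentralExtension.commutatorElement_mem_center {H G : Type*} [Group H] [Group G]
    {ε : H →* G} (hε : IsCentralExtension ε) {x y : H} (h : ⁅ε x, ε y⁆ = 1) :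
    ⁅x, y⁆ ∈ Subgroup.center H :=
  hε.central (by rwa [MonoidHom.mem_ker, map_commutatorElement])

theorem exists_mem_Omega_notMem {n : ℕ∞} {m : ℕ} (hm : (m : ℕ∞) ≤ n) {T : Finset ℤ}
    (hT : T.card < 2 * m) : ∃ l ∈ Omega n, l ∉ T := by
  obtain ⟨l, hlF, hlT⟩ := Finset.exists_mem_notMem_of_card_lt_card
    (s := T) (t := (Finset.Icc (-m : ℤ) m).erase 0)
    (by rw [Finset.card_erase_of_mem (by simp), Int.card_Icc]; omega)
  rw [Finset.mem_erase, Finset.mem_Icc] at hlF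
  exact ⟨l, ⟨hlF.1, le_trans (by exact_mod_cast (by omega : l.natAbs ≤ m)) hm⟩, hlT⟩

section SignedIndices

variable (i j k h : ℤ)

theorem signedIndices_eq_toFinset :
    ({i, -i, j, -j, k, -k, h, -h} : Finset ℤ) = [i, -i, j, -j, k, -k, h, -h].toFinset := by
  simp

theorem card_signedIndices_le : ({i, -i, j, -j, k, -k, h, -h} : Finset ℤ).card ≤ 8 := by
  rw [signedIndices_eq_toFinset]
  exact List.toFinset_card_le _

variable {i j k h}

theorem nodup_of_card_signedIndices_eq (hc : ({i, -i, j, -j, k, -k, h, -h} : Finset ℤ).card = 8) :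
    [i, -i, j, -j, k, -k, h, -h].Nodup := by
  rw [signedIndices_eq_toFinset] at hc
  exact Multiset.coe_nodup.mp (Multiset.toFinset_card_eq_card_iff_nodup.mp hc)

end SignedIndices

theorem StURels.commutatorElement_eq_one_of_fresh {n : ℕ∞} {f : AntiHermitianForm R pi V}
    {L : OddFormParameter f} {G H : Type*} [Group G] [Group H] (S : StURels n f L G)
    {ε : H →* G} (hε : IsCentralExtension ε) {i j k h l : ℤ}
    (hi : i ∈ Omega n) (hj : j ∈ Omega n) (hk : k ∈ Omega n) (hh : h ∈ Omega n)
    (hl : l ∈ Omega n) (hji : j ≠ i) (hji' : j ≠ -i) (hhk : h ≠ k) (hhk' : h ≠ -k)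
    (hki : k ≠ -i) (hkj : k ≠ j) (hhi : h ≠ i) (hhj : h ≠ -j)
    (hfresh : l ∉ ({i, -i, j, -j, k, -k, h, -h} : Finset ℤ))
    {a b : R} {u v : H} (hu : ε u = S.X i j a) (hv : ε v = S.X k h b) : ⁅u, v⁆ = 1 := by
  simp only [Finset.mem_insert, Finset.mem_singleton, not_or] at hfresh
  obtain ⟨hli, hli', hlj, hlj', hlk, hlk', hlh, hlh'⟩ := hfresh
  obtain ⟨v₁, hv₁⟩ := hε.surjective (S.X k l b)
  obtain ⟨v₂, hv₂⟩ := hε.surjective (S.X l h 1)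
  have hv₁₂ : ⁅v₁, v₂⁆⁻¹ * v ∈ Subgroup.center H := by
    refine hε.central ?_
    rw [MonoidHom.mem_ker, map_mul, map_inv, map_commutatorElement, hv₁, hv₂, hv,
      S.rel5 k l h hk hl hh hlk hlk' (Ne.symm hlh) (by omega) hhk hhk', mul_one, inv_mul_cancel]
  refine commutatorElement_eq_one_of_mem_center ?_ ?_ hv₁₂
  · refine hε.commutatorElement_mem_center ?_
    rw [hu, hv₁]
    exact S.rel3 i j k l hi hj hk hl hji hji' hlk hlk' hkj hki hli hlj' a b
  · refine hε.commutatorElement_mem_center ?_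
    rw [hu, hv₂]
    exact S.rel3 i j l h hi hj hl hh hji hji' (Ne.symm hlh) (by omega) hlj hli' hhi hhj a 1

theorem dagger_strengthened_general (f : AntiHermitianForm R pi V) (L : OddFormParameter f)
    (n : ℕ∞) (hn : 4 ≤ n)
    {G : Type u} [Group G] (S : StURels n f L G) :
    (∀ (H : Type u) [Group H], ∀ ε : H →* G, IsCentralExtension ε → DaggerProp S ε →
      ∀ i j k h : ℤ, i ∈ Omega n → j ∈ Omega n → k ∈ Omega n → h ∈ Omega n →
        j ≠ i → j ≠ -i → h ≠ k → h ≠ -k → k ≠ -i → k ≠ j → h ≠ i → h ≠ -j →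
        ∀ a b : R, ∀ u v : H, ε u = S.X i j a → ε v = S.X k h b → ⁅u, v⁆ = 1) ∧
    (5 ≤ n → ∀ (H : Type u) [Group H], ∀ ε : H →* G, IsCentralExtension ε →
      DaggerProp S ε) := by
  constructor
  · intro H _ ε hε hdag i j k h hi hj hk hh hji hji' hhk hhk' hki hkj hhi hhj a b u v hu hv
    by_cases hcard : ({i, -i, j, -j, k, -k, h, -h} : Finset ℤ).card = 8
    · exact hdag i j k h hi hj hk hh hcard a b u v hu hv
    · have hlt : ({i, -i, j, -j, k, -k, h, -h} : Finset ℤ).card < 2 * 4 :=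
        lt_of_le_of_ne (card_signedIndices_le i j k h) hcard
      obtain ⟨l, hl, hfresh⟩ := exists_mem_Omega_notMem (m := 4) hn hlt
      exact S.commutatorElement_eq_one_of_fresh hε hi hj hk hh hl hji hji' hhk hhk' hki hkj
        hhi hhj hfresh hu hv
  · intro hn5 H _ ε hε i j k h hi hj hk hh hcard a b u v hu hv
    have hnodup := nodup_of_card_signedIndices_eq hcard
    simp only [List.nodup_cons, List.mem_cons, List.not_mem_nil, not_or] at hnodup
    have hlt : ({i, -i, j, -j, k, -k, h, -h} : Finset ℤ).card < 2 * 5 := by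
      have := card_signedIndices_le i j k h; omega
    obtain ⟨l, hl, hfresh⟩ := exists_mem_Omega_notMem (m := 5) hn5 hlt
    exact S.commutatorElement_eq_one_of_fresh hε hi hj hk hh hl (by omega) (by omega) (by omega)
      (by omega) (by omega) (by omega) (by omega) (by omega) hfresh hu hv

/-- For `n ≥ 4` and a central extension `ε` of `StU(2n,R,𝔏)` with property (†), any
two preimages of `X_ij(a)` and `X_kh(b)` commute whenever `j ∉ {±i}`, `h ∉ {±k}`,
`k ∉ {−i, j}` and `h ∉ {i, −j, ±k}`.  In particular, for `n ≥ 5` (or `n = ∞`)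
property (†) holds automatically for every central extension of `StU(2n,R,𝔏)`. -/
theorem dagger_strengthened (f : AntiHermitianForm R pi V) (L : OddFormParameter f)
    (n : ℕ∞) (hn : 4 ≤ n)
    {G : Type u} [Group G] (S : StURels n f L G) (hS : IsStU S) :
    (∀ (H : Type u) [Group H], ∀ ε : H →* G, IsCentralExtension ε → DaggerProp S ε →
      ∀ i j k h : ℤ, i ∈ Omega n → j ∈ Omega n → k ∈ Omega n → h ∈ Omega n →
        j ≠ i → j ≠ -i → h ≠ k → h ≠ -k → k ≠ -i → k ≠ j → h ≠ i → h ≠ -j →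
        ∀ a b : R, ∀ u v : H, ε u = S.X i j a → ε v = S.X k h b → ⁅u, v⁆ = 1) ∧
    (5 ≤ n → ∀ (H : Type u) [Group H], ∀ ε : H →* G, IsCentralExtension ε →
      DaggerProp S ε) :=
  dagger_strengthened_general f L n hn S
end

section
/- Let n ≥ 4 or n = ∞, and let ε be a central extension of StU(2n,R,𝔏) satisfying property (†). Then for all indices i, j, k, h ∈ Ω with Card{±i,±j,±k,±h} = 8 and all a, b ∈ R, one has [ε⁻¹X_ki(a), ε⁻¹X_ih(b)] = [ε⁻¹X_kj(ab), ε⁻¹X_jh(1)]. -/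
open MulOpposite
open scoped commutatorElement

universe u

variable {R : Type u} [Ring R] {pi : PseudoInvolution R}
variable {V : Type u} [AddCommGroup V] [Module Rᵐᵒᵖ V]

/- Write `X_ih(b) = [X_ij(b), X_jh(1)]` and lift `X_ij(b)` to `w`. A lift `u` of `X_ki(a)` commutes
with a lift `v'` of `X_jh(1)` by (†), so a commutator identity rewrites `[u, [w, v']]` as the
`w`-conjugate of `[w⁻¹[u, w]w, v']`. Here `w⁻¹[u, w]w` lifts `X_kj(ab)`, and `w` commutes with the
resulting commutator, a lift of `X_kh(ab)`, again by (†). -/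

section GroupLemmas

variable {H : Type*} [Group H]

theorem commutatorElement_mul_left_of_mem_center {z : H} (hz : z ∈ Subgroup.center H) (u v : H) :
    ⁅u * z, v⁆ = ⁅u, v⁆ := by
  have hzv : Commute z v := (Subgroup.mem_center_iff.mp hz v).symm
  calc ⁅u * z, v⁆ = u * (z * v * z⁻¹) * u⁻¹ * v⁻¹ := by simp only [commutatorElement_def]; group
    _ = ⁅u, v⁆ := by rw [hzv.mul_inv_cancel, commutatorElement_def]

theorem commutatorElement_mul_right_of_mem_center {z : H} (hz : z ∈ Subgroup.center H)
    (u v : H) : ⁅u, v * z⁆ = ⁅u, v⁆ := by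
  rw [← commutatorElement_inv, commutatorElement_mul_left_of_mem_center hz, commutatorElement_inv]

/-- Steinberg's central trick. -/
theorem MonoidHom.commutatorElement_eq_of_ker_le_center {G : Type*} [Group G] (ε : H →* G)
    (hε : ε.ker ≤ Subgroup.center H) {u₁ u₂ v₁ v₂ : H} (hu : ε u₁ = ε u₂) (hv : ε v₁ = ε v₂) :
    ⁅u₁, v₁⁆ = ⁅u₂, v₂⁆ := by
  have hu' : u₁⁻¹ * u₂ ∈ Subgroup.center H := hε (by simp [MonoidHom.mem_ker, hu])
  have hv' : v₁⁻¹ * v₂ ∈ Subgroup.center H := hε (by simp [MonoidHom.mem_ker, hv])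
  rw [← mul_inv_cancel_left u₁ u₂, ← mul_inv_cancel_left v₁ v₂,
    commutatorElement_mul_left_of_mem_center hu', commutatorElement_mul_right_of_mem_center hv']

theorem commutatorElement_commutatorElement_of_commute {u v : H} (huv : Commute u v) (w : H) :
    ⁅u, ⁅w, v⁆⁆ = w * ⁅w⁻¹ * ⁅u, w⁆ * w, v⁆ * w⁻¹ :=
  calc ⁅u, ⁅w, v⁆⁆ = u * w * v * w⁻¹ * (v⁻¹ * u⁻¹ * v) * w * v⁻¹ * w⁻¹ := by
        simp only [commutatorElement_def]; group
    _ = u * w * (u⁻¹ * v * u) * w⁻¹ * u⁻¹ * w * v⁻¹ * w⁻¹ := by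
        rw [huv.inv_left.symm.inv_mul_cancel, huv.inv_mul_cancel]
    _ = w * ⁅w⁻¹ * ⁅u, w⁆ * w, v⁆ * w⁻¹ := by simp only [commutatorElement_def]; group

end GroupLemmas

theorem natAbs_ne_of_card_eq_eight {i j k h : ℤ}
    (hcard : ({i, -i, j, -j, k, -k, h, -h} : Finset ℤ).card = 8) :
    i.natAbs ≠ j.natAbs ∧ i.natAbs ≠ k.natAbs ∧ i.natAbs ≠ h.natAbs ∧
      j.natAbs ≠ k.natAbs ∧ j.natAbs ≠ h.natAbs ∧ k.natAbs ≠ h.natAbs := by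
  have hnd : ([i, -i, j, -j, k, -k, h, -h] : List ℤ).Nodup := by
    rw [← Multiset.coe_nodup, ← Multiset.toFinset_card_eq_card_iff_nodup]
    simpa using hcard
  simp only [List.nodup_cons, List.mem_cons, List.not_mem_nil, List.nodup_nil, or_false,
    not_or, not_false_eq_true, and_true] at hnd
  omega

theorem insert_neg_rotate {α : Type*} [DecidableEq α] [Neg α] (i j k h : α) :
    ({k, -k, i, -i, j, -j, h, -h} : Finset α) = {i, -i, j, -j, k, -k, h, -h} := by
  ext x
  simp only [Finset.mem_insert, Finset.mem_singleton]
  tauto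

namespace StURels

variable {n : ℕ∞} {f : AntiHermitianForm R pi V} {L : OddFormParameter f} {G : Type*} [Group G]
  (S : StURels n f L G) {i j k : ℤ}

theorem commutatorElement_X_X (hi : i ∈ Omega n) (hj : j ∈ Omega n) (hk : k ∈ Omega n)
    (hij : i.natAbs ≠ j.natAbs) (hik : i.natAbs ≠ k.natAbs) (hjk : j.natAbs ≠ k.natAbs)
    (a b : R) : ⁅S.X i j a, S.X j k b⁆ = S.X i k (a * b) :=
  S.rel5 i j k hi hj hk (by omega) (by omega) (by omega) (by omega) (by omega) (by omega) a b

theorem commute_X_X_of_eq_column (hi : i ∈ Omega n) (hj : j ∈ Omega n) (hk : k ∈ Omega n)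
    (hij : i.natAbs ≠ j.natAbs) (hik : i.natAbs ≠ k.natAbs) (hjk : j.natAbs ≠ k.natAbs)
    (a b : R) : Commute (S.X i j a) (S.X k j b) := by
  have hj₀ : j ≠ 0 := hj.1
  exact commutatorElement_eq_one_iff_commute.mp <| S.rel3 i j k j hi hj hk hj
    (by omega) (by omega) (by omega) (by omega) (by omega) (by omega) (by omega) (by omega) a b

end StURels

theorem S_well_defined_general (f : AntiHermitianForm R pi V) (L : OddFormParameter f)
    (n : ℕ∞)
    {G : Type u} [Group G] (S : StURels n f L G)
    {H : Type u} [Group H] (ε : H →* G) (hε : IsCentralExtension ε)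
    (hdag : DaggerProp S ε) :
    ∀ i j k h : ℤ, i ∈ Omega n → j ∈ Omega n → k ∈ Omega n → h ∈ Omega n →
      ({i, -i, j, -j, k, -k, h, -h} : Finset ℤ).card = 8 →
      ∀ a b : R, ∀ u v u' v' : H,
        ε u = S.X k i a → ε v = S.X i h b →
        ε u' = S.X k j (a * b) → ε v' = S.X j h 1 →
        ⁅u, v⁆ = ⁅u', v'⁆ := by
  intro i j k h hi hj hk hh hcard a b u v u' v' hu hv hu' hv'
  obtain ⟨hij, hik, hih, hjk, hjh, hkh⟩ := natAbs_ne_of_card_eq_eight hcard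
  obtain ⟨w, hw⟩ := hε.surjective (S.X i j b)
  have hu_v' : Commute u v' := commutatorElement_eq_one_iff_commute.mp <|
    hdag k i j h hk hi hj hh (by rwa [insert_neg_rotate]) a 1 u v' hu hv'
  have hw_c : Commute w ⁅u', v'⁆ := commutatorElement_eq_one_iff_commute.mp <|
    hdag i j k h hi hj hk hh hcard b (a * b) w _ hw <| by
      rw [map_commutatorElement, hu', hv', S.commutatorElement_X_X hk hj hh (Ne.symm hjk) hkh
        hjh, mul_one]
  have hv_eq : ε v = ε ⁅w, v'⁆ := by
    rw [hv, map_commutatorElement, hw, hv', S.commutatorElement_X_X hi hj hh hij hih hjh, mul_one]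
  have hconj_eq : ε (w⁻¹ * ⁅u, w⁆ * w) = ε u' := by
    rw [hu', map_mul, map_mul, map_inv, map_commutatorElement, hu, hw,
      S.commutatorElement_X_X hk hi hj (Ne.symm hik) (Ne.symm hjk) hij,
      (S.commute_X_X_of_eq_column hi hj hk hij hik hjk b (a * b)).inv_mul_cancel]
  calc ⁅u, v⁆ = ⁅u, ⁅w, v'⁆⁆ := ε.commutatorElement_eq_of_ker_le_center hε.central rfl hv_eq
    _ = w * ⁅w⁻¹ * ⁅u, w⁆ * w, v'⁆ * w⁻¹ := commutatorElement_commutatorElement_of_commute hu_v' w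
    _ = w * ⁅u', v'⁆ * w⁻¹ := by
        rw [ε.commutatorElement_eq_of_ker_le_center hε.central hconj_eq rfl]
    _ = ⁅u', v'⁆ := hw_c.mul_inv_cancel

/-- For `n ≥ 4` and a central extension `ε` of `StU(2n,R,𝔏)` with property (†):
whenever the eight indices `±i, ±j, ±k, ±h` are pairwise distinct,
`[ε⁻¹X_ki(a), ε⁻¹X_ih(b)] = [ε⁻¹X_kj(ab), ε⁻¹X_jh(1)]`. -/
theorem S_well_defined (f : AntiHermitianForm R pi V) (L : OddFormParameter f)
    (n : ℕ∞) (hn : 4 ≤ n)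
    {G : Type u} [Group G] (S : StURels n f L G) (hS : IsStU S)
    {H : Type u} [Group H] (ε : H →* G) (hε : IsCentralExtension ε)
    (hdag : DaggerProp S ε) :
    ∀ i j k h : ℤ, i ∈ Omega n → j ∈ Omega n → k ∈ Omega n → h ∈ Omega n →
      ({i, -i, j, -j, k, -k, h, -h} : Finset ℤ).card = 8 →
      ∀ a b : R, ∀ u v u' v' : H,
        ε u = S.X k i a → ε v = S.X i h b →
        ε u' = S.X k j (a * b) → ε v' = S.X j h 1 →
        ⁅u, v⁆ = ⁅u', v'⁆ :=
  S_well_defined_general f L n S ε hε hdag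
end
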